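/- arXiv:2103.01942 — 12 statements merged into one kernel-verified Lean document; each statement's English description precedes it below -/
import Mathlib

section
/- For every ε ≤ 1/32 and every ε-expander G on n vertices (i.e., a graph in which there is an edge between every two disjoint vertex sets of size at least εn), there exists an induced subgraph of G on at least n/2 vertices such that every vertex set X of size at most n/16 in this subgraph has at least 2|X| neighbors outside X (within the subgraph). -/
/-!
Remove a maximal set `W` with `|W| ≤ n/16` and `|N(W)| ≤ 2|W|` (the empty set is one).
If some `X` of size at most `n/16` had fewer than `2|X|` neighbours in `G - W`, then
`W ∪ X` would again have at most twice as many neighbours as elements. By maximality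
`|W ∪ X| > n/16`, so `W ∪ X` and the vertices outside `W ∪ X ∪ N(W ∪ X)` are two sets of
size at least `n/32 ≥ εn` with no edge between them, contradicting expansion.
-/

open Finset

namespace SimpleGraph

variable {V : Type*} [Fintype V] (G : SimpleGraph V)

def IsExpander (ε : ℝ) : Prop :=
  ∀ A B : Finset V, Disjoint A B → ε * Fintype.card V ≤ #A → ε * Fintype.card V ≤ #B →
    ∃ a ∈ A, ∃ b ∈ B, G.Adj a b

open Classical in
noncomputable def nbhd (X : Finset V) : Finset V :=
  {v | v ∉ X ∧ ∃ x ∈ X, G.Adj x v}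

variable {G}

theorem mem_nbhd {X : Finset V} {v : V} : v ∈ G.nbhd X ↔ v ∉ X ∧ ∃ x ∈ X, G.Adj x v := by
  classical
  simp [nbhd]

@[simp]
theorem nbhd_empty : G.nbhd ∅ = ∅ := by
  ext v
  simp [mem_nbhd]

variable [DecidableEq V]

variable (G) in
/-- `G[S]` is `(m, d)`-expanding; `S ∩ G.nbhd X` is the neighbourhood of `X` in `G[S]`. -/
def IsExpandingOn (S : Finset V) (m : ℝ) (d : ℕ) : Prop :=
  ∀ X ⊆ S, (#X : ℝ) ≤ m → d * #X ≤ #(S ∩ G.nbhd X)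

theorem nbhd_union_subset (W X : Finset V) : G.nbhd (W ∪ X) ⊆ G.nbhd W ∪ Wᶜ ∩ G.nbhd X := by
  intro v hv
  obtain ⟨hvWX, x, hx, hxv⟩ := mem_nbhd.1 hv
  simp only [mem_union, not_or] at hx hvWX
  rcases hx with hxW | hxX
  · exact mem_union_left _ (mem_nbhd.2 ⟨hvWX.1, x, hxW, hxv⟩)
  · exact mem_union_right _ (mem_inter.2 ⟨mem_compl.2 hvWX.1, mem_nbhd.2 ⟨hvWX.2, x, hxX, hxv⟩⟩)

theorem card_nbhd_union_le {W X : Finset V} (hWX : Disjoint W X) (hW : #(G.nbhd W) ≤ 2 * #W)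
    (hX : #(Wᶜ ∩ G.nbhd X) ≤ 2 * #X) : #(G.nbhd (W ∪ X)) ≤ 2 * #(W ∪ X) :=
  calc #(G.nbhd (W ∪ X)) ≤ #(G.nbhd W ∪ Wᶜ ∩ G.nbhd X) := card_le_card (nbhd_union_subset W X)
    _ ≤ #(G.nbhd W) + #(Wᶜ ∩ G.nbhd X) := card_union_le _ _
    _ ≤ 2 * #(W ∪ X) := by rw [card_union_of_disjoint hWX]; omega

theorem IsExpander.card_lt_card_add_card_nbhd {ε : ℝ} (hG : G.IsExpander ε) {A : Finset V}
    (hA : ε * Fintype.card V ≤ #A) :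
    (Fintype.card V : ℝ) < #A + #(G.nbhd A) + ε * Fintype.card V := by
  have hcompl := card_compl_add_card (A ∪ G.nbhd A)
  have hunion := card_union_le A (G.nbhd A)
  set B := (A ∪ G.nbhd A)ᶜ with hB_def
  have hB : (Fintype.card V : ℝ) ≤ #B + #A + #(G.nbhd A) := by
    exact_mod_cast (by omega : Fintype.card V ≤ #B + #A + #(G.nbhd A))
  by_contra! hle
  have hAB : Disjoint A B := disjoint_compl_right.mono_right (compl_subset_compl.2 subset_union_left)
  obtain ⟨a, ha, b, hb, hab⟩ := hG A B hAB hA (by linarith)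
  simp only [hB_def, mem_compl, mem_union, not_or] at hb
  exact hb.2 (mem_nbhd.2 ⟨hb.1, a, ha, hab⟩)

theorem IsExpander.isExpandingOn_compl_of_maximal {ε : ℝ} (hε : ε ≤ 1 / 32)
    (hG : G.IsExpander ε) {W : Finset V} (hW : (#W : ℝ) ≤ Fintype.card V / 16)
    (hNW : #(G.nbhd W) ≤ 2 * #W)
    (hmax : ∀ W' : Finset V, (#W' : ℝ) ≤ Fintype.card V / 16 → #(G.nbhd W') ≤ 2 * #W' →
      #W' ≤ #W) : G.IsExpandingOn Wᶜ (Fintype.card V / 16) 2 := by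
  intro X hXW hX
  by_contra! hXbad
  have hXne : X.Nonempty := nonempty_iff_ne_empty.2 fun h => by simp [h] at hXbad
  have hWX : Disjoint W X := subset_compl_iff_disjoint_left.1 hXW
  have hU := card_nbhd_union_le hWX hNW hXbad.le
  have hcard : #(W ∪ X) = #W + #X := card_union_of_disjoint hWX
  by_cases hsmall : (#(W ∪ X) : ℝ) ≤ Fintype.card V / 16
  · have := hmax _ hsmall hU
    have := hXne.card_pos
    omega
  · rw [not_le] at hsmall
    have hn : (0 : ℝ) ≤ Fintype.card V := Nat.cast_nonneg _
    have hεn : ε * Fintype.card V ≤ Fintype.card V / 32 := by nlinarith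
    have hlt := hG.card_lt_card_add_card_nbhd (A := W ∪ X) (by linarith)
    have hU' : (#(G.nbhd (W ∪ X)) : ℝ) ≤ 2 * #(W ∪ X) := by exact_mod_cast hU
    have hcard' : (#(W ∪ X) : ℝ) = #W + #X := by exact_mod_cast hcard
    linarith

theorem IsExpander.exists_isExpandingOn {ε : ℝ} (hε : ε ≤ 1 / 32) (hG : G.IsExpander ε) :
    ∃ S : Finset V, (Fintype.card V : ℝ) / 2 ≤ #S ∧ G.IsExpandingOn S (Fintype.card V / 16) 2 := by
  classical
  have hn : (0 : ℝ) ≤ Fintype.card V := Nat.cast_nonneg _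
  obtain ⟨W, hW, hmax⟩ := exists_max_image
    ({W | (#W : ℝ) ≤ Fintype.card V / 16 ∧ #(G.nbhd W) ≤ 2 * #W} : Finset (Finset V)) card
    ⟨∅, by simp only [mem_filter, mem_univ, card_empty, nbhd_empty]; norm_num; positivity⟩
  simp only [mem_filter, mem_univ, true_and] at hW hmax
  refine ⟨Wᶜ, ?_, hG.isExpandingOn_compl_of_maximal hε hW.1 hW.2 fun W' h₁ h₂ => hmax W' ⟨h₁, h₂⟩⟩
  have : (#Wᶜ : ℝ) = Fintype.card V - #W := by
    rw [card_compl, Nat.cast_sub (card_le_univ W)]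
  linarith [hW.1]

theorem ncard_setOf_mem_nbhd (S X : Finset V) :
    {v : V | v ∈ S ∧ v ∉ X ∧ ∃ x ∈ X, G.Adj x v}.ncard = #(S ∩ G.nbhd X) := by
  rw [← Set.ncard_coe_finset]
  congr 1
  ext v
  simp [mem_nbhd]

end SimpleGraph

open SimpleGraph in
/-- Every ε-expander (ε ≤ 1/32) on n vertices contains an induced
subgraph on at least n/2 vertices in which every vertex set X of size at most
n/16 has at least 2|X| neighbours outside X (within the subgraph). -/
theorem stmt0 {V : Type*} [Fintype V] [DecidableEq V] (n : ℕ)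
    (hn : Fintype.card V = n) (ε : ℝ) (hε : ε ≤ 1 / 32) (G : SimpleGraph V)
    (hexp : ∀ A B : Finset V, Disjoint A B → ε * n ≤ A.card → ε * n ≤ B.card →
      ∃ a ∈ A, ∃ b ∈ B, G.Adj a b) :
    ∃ S : Finset V, (n : ℝ) / 2 ≤ S.card ∧
      ∀ X : Finset V, X ⊆ S → (X.card : ℝ) ≤ n / 16 →
        2 * X.card ≤ ({v : V | v ∈ S ∧ v ∉ X ∧ ∃ x ∈ X, G.Adj x v} : Set V).ncard := by
  subst hn
  obtain ⟨S, hS, hSexp⟩ := IsExpander.exists_isExpandingOn hε hexp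
  refine ⟨S, hS, fun X hXS hX => ?_⟩
  rw [ncard_setOf_mem_nbhd]
  exact hSexp X hXS hX
end

section
/- Let d ≥ 2 and ε ≤ 1/(8d). Let G be a bipartite graph with parts X₁, X₂ of size n each, such that for every A₁ ⊆ X₁ and A₂ ⊆ X₂ with |A₁| ≥ εn and |A₂| ≥ εn there is an edge between A₁ and A₂. Then G contains an induced subgraph G' on at least n vertices such that every vertex set X of G' with |X| ≤ n/(4d) satisfies |N_{G'}(X)| ≥ d|X|. -/
/-!
Call a set `Y` non-expanding if it has at most `d |Y|` outside neighbours. In the expander,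
a non-expanding set `Y` with `|Y| ≤ n/(2d)` leaves at least `εn` vertices of each side outside
`Y ∪ N(Y)`, so it cannot contain `εn` vertices of either side: `|Y| < 2εn ≤ n/(4d)`.
Take a maximal non-expanding `Y` with `|Y| ≤ n/(2d)` and delete `Y ∪ N(Y)`, at most
`(d+1) n/(4d) ≤ n` vertices. If a set `X` of size at most `n/(4d)` failed to expand in what
remains, `Y ∪ X` would again be non-expanding and of size at most `n/(2d)`, contradicting
maximality.
-/

open Finset

namespace SimpleGraph

variable {V : Type*} {G : SimpleGraph V}

def IsBipartiteExpander (G : SimpleGraph V) (ε : ℝ) (X₁ X₂ : Finset V) : Prop :=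
  ∀ A₁ ⊆ X₁, ∀ A₂ ⊆ X₂, ε * #X₁ ≤ #A₁ → ε * #X₂ ≤ #A₂ → ∃ a ∈ A₁, ∃ b ∈ A₂, G.Adj a b

lemma IsBipartiteExpander.symm {ε : ℝ} {X₁ X₂ : Finset V} (h : G.IsBipartiteExpander ε X₁ X₂) :
    G.IsBipartiteExpander ε X₂ X₁ :=
  fun A₂ hA₂ A₁ hA₁ h₂ h₁ => by
    obtain ⟨a, ha, b, hb, hab⟩ := h A₁ hA₁ A₂ hA₂ h₁ h₂
    exact ⟨b, hb, a, ha, hab.symm⟩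

variable [DecidableEq V]

/-- `N_{G[S]}(X)`. -/
noncomputable def outerNbhd (G : SimpleGraph V) (S X : Finset V) : Finset V :=
  open Classical in {v ∈ S | v ∉ X ∧ ∃ x ∈ X, G.Adj x v}

lemma mem_outerNbhd {S X : Finset V} {v : V} :
    v ∈ G.outerNbhd S X ↔ v ∈ S ∧ v ∉ X ∧ ∃ x ∈ X, G.Adj x v := by
  simp [outerNbhd]

lemma coe_outerNbhd (S X : Finset V) :
    (G.outerNbhd S X : Set V) = {v | v ∈ S ∧ v ∉ X ∧ ∃ x ∈ X, G.Adj x v} := by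
  ext v
  simp [mem_outerNbhd]

@[simp]
lemma outerNbhd_empty (S : Finset V) : G.outerNbhd S ∅ = ∅ := by
  ext v
  simp [mem_outerNbhd]

lemma outerNbhd_union_subset (S Y X : Finset V) :
    G.outerNbhd S (Y ∪ X) ⊆
      G.outerNbhd S Y ∪ G.outerNbhd (S \ (Y ∪ G.outerNbhd S Y)) X := by
  intro v hv
  obtain ⟨hvS, hvYX, x, hx, hxv⟩ := mem_outerNbhd.1 hv
  rw [mem_union, not_or] at hvYX
  by_cases hvN : v ∈ G.outerNbhd S Y
  · exact mem_union_left _ hvN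
  rcases mem_union.1 hx with hxY | hxX
  · exact absurd (mem_outerNbhd.2 ⟨hvS, hvYX.1, x, hxY, hxv⟩) hvN
  · refine mem_union_right _ (mem_outerNbhd.2 ⟨mem_sdiff.2 ⟨hvS, ?_⟩, hvYX.2, x, hxX, hxv⟩)
    simp [hvYX.1, hvN]

lemma exists_subset_forall_card_outerNbhd_ge {S : Finset V} {d : ℕ} {m : ℝ} (hm : 0 ≤ m)
    (hsmall : ∀ Y ⊆ S, (#Y : ℝ) ≤ 2 * m → #(G.outerNbhd S Y) ≤ d * #Y → (#Y : ℝ) ≤ m) :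
    ∃ T ⊆ S, (#S : ℝ) ≤ #T + (d + 1) * m ∧
      ∀ X ⊆ T, (#X : ℝ) ≤ m → d * #X ≤ #(G.outerNbhd T X) := by
  set F := {Y ∈ S.powerset | (#Y : ℝ) ≤ 2 * m ∧ #(G.outerNbhd S Y) ≤ d * #Y}
  obtain ⟨Y, hYmax⟩ := F.exists_maximal ⟨∅, by simp [F, hm]⟩
  obtain ⟨hYS, hY2m, hYN⟩ : Y ⊆ S ∧ (#Y : ℝ) ≤ 2 * m ∧ #(G.outerNbhd S Y) ≤ d * #Y := by
    simpa [F] using hYmax.1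
  have hYm := hsmall Y hYS hY2m hYN
  refine ⟨S \ (Y ∪ G.outerNbhd S Y), sdiff_subset, ?_, fun X hXT hXm => ?_⟩
  · have hS : #S ≤ #(S \ (Y ∪ G.outerNbhd S Y)) + (#Y + d * #Y) :=
      card_le_card_sdiff_add_card.trans (by grw [card_union_le Y, hYN])
    have : ((d : ℝ) + 1) * #Y ≤ (d + 1) * m := by gcongr
    have : (#S : ℝ) ≤ #(S \ (Y ∪ G.outerNbhd S Y)) + (#Y + d * #Y) := by exact_mod_cast hS
    linarith
  by_contra! hX
  have hXne : X.Nonempty := nonempty_iff_ne_empty.2 fun h => by simp [h] at hX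
  have hYX : Disjoint Y X :=
    (disjoint_union_right.1 (disjoint_of_subset_left hXT sdiff_disjoint)).1.symm
  have hYX_card : #(Y ∪ X) = #Y + #X := card_union_of_disjoint hYX
  have hYXF : Y ∪ X ∈ F := by
    refine mem_filter.2 ⟨mem_powerset.2 (union_subset hYS (hXT.trans sdiff_subset)), ?_, ?_⟩
    · rw [hYX_card]
      push_cast
      linarith
    · calc #(G.outerNbhd S (Y ∪ X))
          ≤ #(G.outerNbhd S Y) + #(G.outerNbhd (S \ (Y ∪ G.outerNbhd S Y)) X) :=
            (card_le_card (outerNbhd_union_subset S Y X)).trans (card_union_le _ _)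
        _ ≤ d * #(Y ∪ X) := by rw [hYX_card]; linarith
  obtain ⟨x, hx⟩ := hXne
  exact disjoint_right.1 hYX hx (hYmax.2 hYXF subset_union_left (mem_union_right Y hx))

namespace IsBipartiteExpander

variable {ε : ℝ} {X₁ X₂ : Finset V}

lemma card_lt_add_card_union_outerNbhd (h : G.IsBipartiteExpander ε X₁ X₂) {S Y : Finset V}
    (hS : X₂ ⊆ S) (hY : ε * #X₁ ≤ #(Y ∩ X₁)) :
    (#X₂ : ℝ) < ε * #X₂ + #(Y ∪ G.outerNbhd S Y) := by
  have hrest : (#(X₂ \ (Y ∪ G.outerNbhd S Y)) : ℝ) < ε * #X₂ := by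
    by_contra! hA
    obtain ⟨a, ha, b, hb, hab⟩ := h _ inter_subset_right _ sdiff_subset hY hA
    rw [mem_sdiff, mem_union, not_or] at hb
    exact hb.2.2 (mem_outerNbhd.2 ⟨hS hb.1, hb.2.1, a, mem_of_mem_inter_left ha, hab⟩)
  have : (#X₂ : ℝ) ≤ #(X₂ \ (Y ∪ G.outerNbhd S Y)) + #(Y ∪ G.outerNbhd S Y) := by
    exact_mod_cast card_le_card_sdiff_add_card
  linarith

lemma card_lt_of_card_union_outerNbhd_le (h : G.IsBipartiteExpander ε X₁ X₂) {n : ℕ}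
    (h₁ : #X₁ = n) (h₂ : #X₂ = n) {Y : Finset V} (hY : Y ⊆ X₁ ∪ X₂)
    (hsmall : (#(Y ∪ G.outerNbhd (X₁ ∪ X₂) Y) : ℝ) + ε * n ≤ n) :
    (#Y : ℝ) < 2 * ε * n := by
  by_contra! hlarge
  have hsplit : (#Y : ℝ) ≤ #(Y ∩ X₁) + #(Y ∩ X₂) := by
    have : Y = Y ∩ X₁ ∪ Y ∩ X₂ := by rw [← inter_union_distrib_left, inter_eq_left.2 hY]
    exact_mod_cast (card_le_card this.le).trans (card_union_le _ _)
  rcases le_or_gt (ε * n) #(Y ∩ X₁) with hY₁ | hY₁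
  · have := h.card_lt_add_card_union_outerNbhd (S := X₁ ∪ X₂) subset_union_right (h₁ ▸ hY₁)
    rw [h₂] at this
    linarith
  · have hY₂ : ε * #X₂ ≤ #(Y ∩ X₂) := by rw [h₂]; linarith
    have := h.symm.card_lt_add_card_union_outerNbhd (S := X₁ ∪ X₂) subset_union_left hY₂
    rw [h₁] at this
    linarith

lemma card_le_of_card_outerNbhd_le (h : G.IsBipartiteExpander ε X₁ X₂) {n d : ℕ}
    (h₁ : #X₁ = n) (h₂ : #X₂ = n) (hd : 2 ≤ d) (hε : ε ≤ 1 / (8 * d)) {Y : Finset V}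
    (hY : Y ⊆ X₁ ∪ X₂) (hY₂ : (#Y : ℝ) ≤ 2 * (n / (4 * d)))
    (hN : #(G.outerNbhd (X₁ ∪ X₂) Y) ≤ d * #Y) :
    (#Y : ℝ) ≤ n / (4 * d) := by
  have hd' : (2 : ℝ) ≤ d := by exact_mod_cast hd
  set q : ℝ := n / (8 * d)
  have hq : (n : ℝ) = 8 * d * q := by simp only [q]; field_simp
  have hq₀ : 0 ≤ q := by positivity
  have hεn : ε * n ≤ q := by
    simpa [q, div_eq_mul_inv, mul_comm] using mul_le_mul_of_nonneg_right hε n.cast_nonneg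
  have hm : (n : ℝ) / (4 * d) = 2 * q := by simp only [q]; field_simp; ring
  have hYN : (#(Y ∪ G.outerNbhd (X₁ ∪ X₂) Y) : ℝ) ≤ (d + 1) * #Y := by
    have := (card_union_le Y _).trans (Nat.add_le_add_left hN _)
    rw [add_one_mul, add_comm]
    exact_mod_cast this
  have hlt := h.card_lt_of_card_union_outerNbhd_le h₁ h₂ hY (by nlinarith)
  nlinarith

end IsBipartiteExpander

end SimpleGraph

open SimpleGraph

theorem stmt1_general {V : Type*} [DecidableEq V] (n d : ℕ) (hd : 2 ≤ d)
    (ε : ℝ) (hε : ε ≤ 1 / (8 * d)) (G : SimpleGraph V) (X₁ X₂ : Finset V)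
    (hdisj : Disjoint X₁ X₂) (hcard1 : X₁.card = n) (hcard2 : X₂.card = n)
    (hexp : ∀ A₁ ⊆ X₁, ∀ A₂ ⊆ X₂, ε * n ≤ A₁.card → ε * n ≤ A₂.card →
      ∃ a ∈ A₁, ∃ b ∈ A₂, G.Adj a b) :
    ∃ S : Finset V, S ⊆ X₁ ∪ X₂ ∧ n ≤ S.card ∧
      ∀ X : Finset V, X ⊆ S → (X.card : ℝ) ≤ n / (4 * d) →
        d * X.card ≤ ({v : V | v ∈ S ∧ v ∉ X ∧ ∃ x ∈ X, G.Adj x v} : Set V).ncard := by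
  have hG : G.IsBipartiteExpander ε X₁ X₂ := by
    simpa only [IsBipartiteExpander, hcard1, hcard2] using hexp
  obtain ⟨T, hTS, hTcard, hTexp⟩ :=
    G.exists_subset_forall_card_outerNbhd_ge (by positivity) fun Y hY hY₂ hN =>
      hG.card_le_of_card_outerNbhd_le hcard1 hcard2 hd hε hY hY₂ hN
  refine ⟨T, hTS, ?_, fun X hXT hXm => ?_⟩
  · have hS : (#(X₁ ∪ X₂) : ℝ) = 2 * n := by
      rw [card_union_of_disjoint hdisj, hcard1, hcard2]; push_cast; ring
    have hd' : (1 : ℝ) ≤ d := by exact_mod_cast one_le_two.trans hd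
    have : ((d : ℝ) + 1) * (n / (4 * d)) ≤ n := by
      rw [mul_div_assoc', div_le_iff₀ (by positivity)]
      nlinarith [(n.cast_nonneg : (0 : ℝ) ≤ n)]
    have : (n : ℝ) ≤ #T := by linarith
    exact_mod_cast this
  · rw [← coe_outerNbhd, Set.ncard_coe_finset]
    exact hTexp X hXT hXm

/-- A balanced bipartite ε-expander (ε ≤ 1/(8d)) with parts of
size n contains an induced subgraph on at least n vertices in which each
vertex set X with |X| ≤ n/(4d) has at least d|X| neighbours outside X. -/
theorem stmt1 {V : Type*} [Fintype V] [DecidableEq V] (n d : ℕ) (hd : 2 ≤ d)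
    (ε : ℝ) (hε : ε ≤ 1 / (8 * d)) (G : SimpleGraph V) (X₁ X₂ : Finset V)
    (hdisj : Disjoint X₁ X₂) (hcard1 : X₁.card = n) (hcard2 : X₂.card = n)
    (hbip : ∀ u v, G.Adj u v → (u ∈ X₁ ∧ v ∈ X₂) ∨ (u ∈ X₂ ∧ v ∈ X₁))
    (hexp : ∀ A₁ ⊆ X₁, ∀ A₂ ⊆ X₂, ε * n ≤ A₁.card → ε * n ≤ A₂.card →
      ∃ a ∈ A₁, ∃ b ∈ A₂, G.Adj a b) :
    ∃ S : Finset V, S ⊆ X₁ ∪ X₂ ∧ n ≤ S.card ∧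
      ∀ X : Finset V, X ⊆ S → (X.card : ℝ) ≤ n / (4 * d) →
        d * X.card ≤ ({v : V | v ∈ S ∧ v ∉ X ∧ ∃ x ∈ X, G.Adj x v} : Set V).ncard :=
  stmt1_general n d hd ε hε G X₁ X₂ hdisj hcard1 hcard2 hexp
end

section
/- Let G be a graph on n vertices. Suppose A ⊆ V(G) is a set that is maximal (with respect to inclusion) among sets satisfying |A| ≤ m and |N_G(A)| < d|A|, for given parameters m ≥ 1, d ≥ 2. Then the induced subgraph G' = G \ (A ∪ N_G(A)) is (m/2, d)-expanding, i.e., every B ⊆ V(G') with |B| ≤ m/2 and |A| + |B| ≤ m satisfies |N_{G'}(B)| ≥ d|B|. -/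
/-- The (outside) neighbourhood of a set of vertices. -/
def nset {V : Type*} (G : SimpleGraph V) (A : Set V) : Set V :=
  {v | v ∉ A ∧ ∃ x ∈ A, G.Adj x v}

/-
If some nonempty B outside A ∪ N(A) expanded poorly inside G' = G - (A ∪ N(A)), then A ∪ B would
also violate the expansion bound, because N(A ∪ B) ⊆ N(A) ∪ N_{G'}(B) and A, B are disjoint.
This contradicts the maximality of A.
-/

theorem nset_union_subset {V : Type*} (G : SimpleGraph V) (A B : Set V) :
    nset G (A ∪ B) ⊆ nset G A ∪ (nset G B \ (A ∪ nset G A)) := by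
  rintro v ⟨hvAB, x, hx, hxv⟩
  by_cases hvNA : v ∈ nset G A
  · exact Or.inl hvNA
  have hvA : v ∉ A := fun h => hvAB (Or.inl h)
  rcases hx with hxA | hxB
  · exact absurd ⟨hvA, x, hxA, hxv⟩ hvNA
  · exact Or.inr ⟨⟨fun h => hvAB (Or.inr h), x, hxB, hxv⟩, fun h => h.elim hvA hvNA⟩

theorem ncard_nset_union_le {V : Type*} [Finite V] (G : SimpleGraph V) (A B : Set V) :
    (nset G (A ∪ B)).ncard ≤ (nset G A).ncard + (nset G B \ (A ∪ nset G A)).ncard :=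
  (Set.ncard_le_ncard (nset_union_subset G A B)).trans (Set.ncard_union_le _ _)

theorem stmt2_general {V : Type*} [Fintype V] [DecidableEq V] (m d : ℕ)
    (G : SimpleGraph V) (A : Finset V)
    (hA2 : (nset G ↑A).ncard < d * A.card)
    (hmax : ∀ A' : Finset V, A ⊆ A' → A'.card ≤ m →
      (nset G ↑A').ncard < d * A'.card → A' = A) :
    ∀ B : Finset V, (↑B : Set V) ⊆ Set.univ \ (↑A ∪ nset G ↑A) →
      2 * B.card ≤ m → A.card + B.card ≤ m →
      d * B.card ≤
        ({v : V | v ∈ Set.univ \ (↑A ∪ nset G ↑A) ∧ v ∉ B ∧ ∃ x ∈ B, G.Adj x v} : Set V).ncard := by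
  intro B hB _ hAB
  have hdisj : Disjoint A B :=
    Finset.disjoint_right.2 fun _ hb ha => (hB hb).2 (Or.inl ha)
  have hNB : {v : V | v ∈ Set.univ \ (↑A ∪ nset G ↑A) ∧ v ∉ B ∧ ∃ x ∈ B, G.Adj x v}
      = nset G ↑B \ (↑A ∪ nset G ↑A) := by
    ext v
    simp only [nset, Set.mem_ofPred_eq, Set.mem_sdiff, Set.mem_univ, true_and]
    tauto
  rw [hNB]
  by_contra! hsmall
  have hviol : (nset G ↑(A ∪ B)).ncard < d * (A ∪ B).card := by
    rw [Finset.coe_union, Finset.card_union_of_disjoint hdisj, mul_add]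
    have := ncard_nset_union_le G ↑A ↑B
    omega
  have hBA : B ⊆ A := Finset.union_eq_left.1
    (hmax (A ∪ B) Finset.subset_union_left (by rwa [Finset.card_union_of_disjoint hdisj]) hviol)
  have hBempty : B = ∅ :=
    Finset.subset_empty.1 fun _ hb => (Finset.disjoint_right.1 hdisj hb (hBA hb)).elim
  simp [hBempty] at hsmall

/-- If A is maximal (w.r.t. inclusion) among vertex sets with
|A| ≤ m and |N(A)| < d|A|, then G' = G \ (A ∪ N(A)) is (m/2, d)-expanding:
every B ⊆ V(G') with |B| ≤ m/2 and |A| + |B| ≤ m satisfies |N_{G'}(B)| ≥ d|B|. -/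
theorem stmt2 {V : Type*} [Fintype V] [DecidableEq V] (m d : ℕ) (hm : 1 ≤ m)
    (hd : 2 ≤ d) (G : SimpleGraph V) (A : Finset V)
    (hA1 : A.card ≤ m) (hA2 : (nset G ↑A).ncard < d * A.card)
    (hmax : ∀ A' : Finset V, A ⊆ A' → A'.card ≤ m →
      (nset G ↑A').ncard < d * A'.card → A' = A) :
    ∀ B : Finset V, (↑B : Set V) ⊆ Set.univ \ (↑A ∪ nset G ↑A) →
      2 * B.card ≤ m → A.card + B.card ≤ m →
      d * B.card ≤
        ({v : V | v ∈ Set.univ \ (↑A ∪ nset G ↑A) ∧ v ∉ B ∧ ∃ x ∈ B, G.Adj x v} : Set V).ncard :=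
  stmt2_general m d G A hA2 hmax
end

section
/- Let G be an ε-expander on N vertices and let F be a subgraph of G on at least N/2 vertices such that every X ⊆ V(F) with |X| ≤ N/16 satisfies |N_F(X)| ≥ 2|X|, where ε ≤ 1/16. Let k, t be positive integers. Then the graph G' on V(F), in which two vertices are adjacent when their distance in F is at most k/t (and which thus is the (k/t)-th power of F), is a 2^{-k/(3t)}-expander, provided 2^{k/(3t)} · N/16 ≥ N, i.e., k/(3t) ≥ 4. -/
/-!
Grow a set `C ⊆ S` by repeatedly adding its outer `F`-neighbourhood inside `S`. While the set has
at most `N/16` elements it at least triples at each step, so after `r = ⌊k/(3t)⌋` steps it has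
more than `N/16 ≥ εN` elements, or at least `2^r |C| ≥ 2^{r - k/(3t)} |S| ≥ |S|/2 ≥ N/4 ≥ εN`
elements. The grown sets of `A` and `B` therefore meet or are joined by an edge of the ε-expander
`G`, which links a vertex of `A` to a vertex of `B` by a walk in `G` of length at most `2r + 1 ≤ k`.
-/

open Finset SimpleGraph

section Growth

variable {V : Type*} [DecidableEq V] (F : SimpleGraph V) [DecidableRel F.Adj] (S : Finset V)

def outerBoundary (X : Finset V) : Finset V :=
  {v ∈ S | v ∉ X ∧ ∃ x ∈ X, F.Adj x v}

def ballIn (A : Finset V) (r : ℕ) : Finset V :=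
  (fun X => X ∪ outerBoundary F S X)^[r] A

variable {F S}

theorem coe_outerBoundary (X : Finset V) :
    (outerBoundary F S X : Set V) = {v | v ∈ S ∧ v ∉ X ∧ ∃ x ∈ X, F.Adj x v} := by
  ext v
  simp [outerBoundary]

theorem ballIn_zero (A : Finset V) : ballIn F S A 0 = A := rfl

theorem ballIn_succ (A : Finset V) (r : ℕ) :
    ballIn F S A (r + 1) = ballIn F S A r ∪ outerBoundary F S (ballIn F S A r) :=
  Function.iterate_succ_apply' _ r A

theorem card_ballIn_succ (A : Finset V) (r : ℕ) :
    #(ballIn F S A (r + 1)) = #(ballIn F S A r) + #(outerBoundary F S (ballIn F S A r)) := by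
  rw [ballIn_succ, card_union_of_disjoint]
  exact disjoint_right.mpr fun _ hv => (mem_filter.mp hv).2.1

theorem ballIn_subset {A : Finset V} (hA : A ⊆ S) (r : ℕ) : ballIn F S A r ⊆ S := by
  induction r with
  | zero => exact hA
  | succ r ih => rw [ballIn_succ]; exact union_subset ih (filter_subset _ _)

theorem exists_walk_of_mem_ballIn {A : Finset V} {r : ℕ} {v : V} (hv : v ∈ ballIn F S A r) :
    ∃ a ∈ A, ∃ p : F.Walk a v, p.length ≤ r := by
  induction r generalizing v with
  | zero => exact ⟨v, hv, .nil, le_rfl⟩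
  | succ r ih =>
    rw [ballIn_succ, mem_union] at hv
    rcases hv with hv | hv
    · obtain ⟨a, ha, p, hp⟩ := ih hv
      exact ⟨a, ha, p, hp.trans r.le_succ⟩
    · obtain ⟨-, -, x, hx, hxv⟩ := mem_filter.mp hv
      obtain ⟨a, ha, p, hp⟩ := ih hx
      exact ⟨a, ha, p.concat hxv, by rw [Walk.length_concat]; omega⟩

theorem lt_card_ballIn_or_pow_mul_le {m c : ℕ}
    (hexp : ∀ X ⊆ S, #X ≤ m → c * #X ≤ #(outerBoundary F S X))
    {A : Finset V} (hA : A ⊆ S) (r : ℕ) :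
    m < #(ballIn F S A r) ∨ (c + 1) ^ r * #A ≤ #(ballIn F S A r) := by
  induction r with
  | zero => simp [ballIn_zero]
  | succ r ih =>
    rw [card_ballIn_succ]
    by_cases hsmall : #(ballIn F S A r) ≤ m
    · have hboundary := hexp _ (ballIn_subset hA r) hsmall
      rcases ih with ih | ih
      · omega
      · right
        calc (c + 1) ^ (r + 1) * #A = (c + 1) * ((c + 1) ^ r * #A) := by ring
          _ ≤ (c + 1) * #(ballIn F S A r) := Nat.mul_le_mul_left _ ih
          _ ≤ _ := by linarith
    · omega

end Growth

theorem half_le_two_pow_floor_mul_rpow_neg (x : ℝ) : 1 / 2 ≤ 2 ^ ⌊x⌋₊ * (2 : ℝ) ^ (-x) := by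
  rw [← Real.rpow_natCast, ← Real.rpow_add two_pos]
  calc (1 / 2 : ℝ) = 2 ^ (-1 : ℝ) := by norm_num
    _ ≤ _ := Real.rpow_le_rpow_of_exponent_le one_le_two (by linarith [Nat.lt_floor_add_one x])

theorem exists_eq_or_adj_of_forall_disjoint {V : Type*} {G : SimpleGraph V} {m : ℝ}
    (hexp : ∀ A B : Finset V, Disjoint A B → m ≤ #A → m ≤ #B → ∃ a ∈ A, ∃ b ∈ B, G.Adj a b)
    {X Y : Finset V} (hX : m ≤ #X) (hY : m ≤ #Y) :
    ∃ x ∈ X, ∃ y ∈ Y, x = y ∨ G.Adj x y := by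
  by_cases hXY : Disjoint X Y
  · obtain ⟨x, hx, y, hy, hxy⟩ := hexp X Y hXY hX hY
    exact ⟨x, hx, y, hy, .inr hxy⟩
  · obtain ⟨x, hxX, hxY⟩ := not_disjoint_iff.mp hXY
    exact ⟨x, hxX, x, hxY, .inl rfl⟩

theorem exists_walk_length_le_of_eq_or_adj {V : Type*} {F G : SimpleGraph V} (hFG : F ≤ G)
    {a b u v : V} (pa : F.Walk a u) (pb : F.Walk b v) (huv : u = v ∨ G.Adj u v) :
    ∃ w : G.Walk a b, w.length ≤ pa.length + pb.length + 1 := by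
  rcases huv with rfl | huv
  · refine ⟨(pa.mapLe hFG).append (pb.mapLe hFG).reverse, ?_⟩
    simp only [Walk.length_append, Walk.length_reverse, Walk.length_mapLe]
    omega
  · refine ⟨((pa.mapLe hFG).concat huv).append (pb.mapLe hFG).reverse, ?_⟩
    simp only [Walk.length_append, Walk.length_concat, Walk.length_reverse, Walk.length_mapLe]
    omega

theorem mul_le_card_ballIn {V : Type*} [DecidableEq V] {F : SimpleGraph V} [DecidableRel F.Adj]
    {S A : Finset V} {N : ℕ} {ε x : ℝ} (hε : ε ≤ 1 / 16) (hS : (N : ℝ) / 2 ≤ #S)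
    (hexp : ∀ X ⊆ S, 16 * #X ≤ N → 2 * #X ≤ #(outerBoundary F S X))
    (hAS : A ⊆ S) (hA : (2 : ℝ) ^ (-x) * #S ≤ #A) :
    ε * N ≤ #(ballIn F S A ⌊x⌋₊) := by
  have hεN : ε * N ≤ N / 16 := by
    nlinarith [(Nat.cast_nonneg N : (0 : ℝ) ≤ N)]
  have hexp' : ∀ X ⊆ S, #X ≤ N / 16 → 2 * #X ≤ #(outerBoundary F S X) :=
    fun X hXS hX => hexp X hXS (by omega)
  rcases lt_card_ballIn_or_pow_mul_le hexp' hAS ⌊x⌋₊ with hbig | hgrow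
  · have : (N : ℝ) < 16 * #(ballIn F S A ⌊x⌋₊) := by exact_mod_cast (by omega : N < _)
    linarith
  · have hpow : (2 : ℝ) ^ ⌊x⌋₊ * #A ≤ #(ballIn F S A ⌊x⌋₊) := by
      have := Nat.mul_le_mul_right #A (Nat.pow_le_pow_left (by norm_num : 2 ≤ 2 + 1) ⌊x⌋₊)
      exact_mod_cast this.trans hgrow
    have hhalf := half_le_two_pow_floor_mul_rpow_neg x
    calc ε * N ≤ 1 / 2 * #S := by linarith
      _ ≤ 2 ^ ⌊x⌋₊ * (2 : ℝ) ^ (-x) * #S := by gcongr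
      _ ≤ 2 ^ ⌊x⌋₊ * #A := by rw [mul_assoc]; gcongr
      _ ≤ _ := hpow

theorem stmt4_general {V : Type*} (N k t : ℕ) (ht : 1 ≤ t)
    (hk : 12 * t ≤ k) (ε : ℝ) (hε : ε ≤ 1 / 16)
    (G F : SimpleGraph V) (S : Finset V) (hFG : F ≤ G)
    (hScard : (N : ℝ) / 2 ≤ S.card)
    (hexpG : ∀ A B : Finset V, Disjoint A B → ε * N ≤ A.card → ε * N ≤ B.card →
      ∃ a ∈ A, ∃ b ∈ B, G.Adj a b)
    (hexpF : ∀ X : Finset V, X ⊆ S → 16 * X.card ≤ N →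
      2 * X.card ≤ ({v : V | v ∈ S ∧ v ∉ X ∧ ∃ x ∈ X, F.Adj x v} : Set V).ncard) :
    ∀ A B : Finset V, A ⊆ S → B ⊆ S → Disjoint A B →
      (2 : ℝ) ^ (-(k : ℝ) / (3 * t)) * S.card ≤ A.card →
      (2 : ℝ) ^ (-(k : ℝ) / (3 * t)) * S.card ≤ B.card →
      ∃ a ∈ A, ∃ b ∈ B, a ≠ b ∧ G.Reachable a b ∧ G.dist a b ≤ k := by
  classical
  intro A B hAS hBS hAB hA hB
  rw [neg_div] at hA hB
  have hexp : ∀ X ⊆ S, 16 * #X ≤ N → 2 * #X ≤ #(outerBoundary F S X) := fun X hXS hX => by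
    simpa [← coe_outerBoundary, Set.ncard_coe_finset] using hexpF X hXS hX
  obtain ⟨u, hu, v, hv, huv⟩ := exists_eq_or_adj_of_forall_disjoint hexpG
    (mul_le_card_ballIn hε hScard hexp hAS hA) (mul_le_card_ballIn hε hScard hexp hBS hB)
  obtain ⟨a, ha, pa, hpa⟩ := exists_walk_of_mem_ballIn hu
  obtain ⟨b, hb, pb, hpb⟩ := exists_walk_of_mem_ballIn hv
  obtain ⟨w, hw⟩ := exists_walk_length_le_of_eq_or_adj hFG pa pb huv
  have hr : ⌊(k : ℝ) / (3 * t)⌋₊ ≤ k / 3 := by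
    rw [show (3 * t : ℝ) = (3 * t : ℕ) by push_cast; ring, Nat.floor_div_eq_div]
    exact Nat.div_le_div_left (by omega) (by norm_num)
  exact ⟨a, ha, b, hb, (ne_of_mem_of_not_mem hb (disjoint_left.mp hAB ha)).symm, w.reachable,
    (dist_le w).trans (by omega)⟩

/-- Let G be an ε-expander (ε ≤ 1/16) on N vertices, and F ⊆ G a
subgraph on a vertex set S with |S| ≥ N/2 such that every X ⊆ S with
|X| ≤ N/16 satisfies |N_F(X)| ≥ 2|X|.  If k/(3t) ≥ 4 (i.e. 12t ≤ k), then for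
every two disjoint sets A, B ⊆ S of size at least 2^{-k/(3t)}|S| there is an
edge of G^k between A and B (i.e. the power of F on S is a
2^{-k/(3t)}-expander, with the connecting edge taken in G^k). -/
theorem stmt4 {V : Type*} [Fintype V] [DecidableEq V] (N k t : ℕ) (ht : 1 ≤ t)
    (hk : 12 * t ≤ k) (hN : Fintype.card V = N) (ε : ℝ) (hε : ε ≤ 1 / 16)
    (G F : SimpleGraph V) (S : Finset V) (hFG : F ≤ G)
    (hFS : ∀ u v, F.Adj u v → u ∈ S ∧ v ∈ S)
    (hScard : (N : ℝ) / 2 ≤ S.card)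
    (hexpG : ∀ A B : Finset V, Disjoint A B → ε * N ≤ A.card → ε * N ≤ B.card →
      ∃ a ∈ A, ∃ b ∈ B, G.Adj a b)
    (hexpF : ∀ X : Finset V, X ⊆ S → 16 * X.card ≤ N →
      2 * X.card ≤ ({v : V | v ∈ S ∧ v ∉ X ∧ ∃ x ∈ X, F.Adj x v} : Set V).ncard) :
    ∀ A B : Finset V, A ⊆ S → B ⊆ S → Disjoint A B →
      (2 : ℝ) ^ (-(k : ℝ) / (3 * t)) * S.card ≤ A.card →
      (2 : ℝ) ^ (-(k : ℝ) / (3 * t)) * S.card ≤ B.card →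
      ∃ a ∈ A, ∃ b ∈ B, a ≠ b ∧ G.Reachable a b ∧ G.dist a b ≤ k :=
  stmt4_general N k t ht hk ε hε G F S hFG hScard hexpG hexpF
end

section
/- Let r, ℓ, s, h, d be positive integers with r ≤ ℓ and (2ℓ+1 choose r)·s-type Ramsey bounds satisfied: assume h is large enough that the Ramsey number of r-uniform cliques guarantees a monochromatic (2ℓ+1)-set among h+1 vertices in any s-colouring of r-sets. Let T be the complete binary ordered tree of height h, and colour all r-subsets of the leaves of T with s colours so that any two r-sets of leaves corresponding to isomorphic ordered subtrees receive the same colour. Then there exist pairwise disjoint sets X, Y, Z of leaves, each of size ℓ, such that the minimal subtrees of T spanned by X and by Z are isomorphic (as ordered trees) and vertex-disjoint, and every r-subset of X ∪ Y and every r-subset of Y ∪ Z has the same single colour. -/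
/-!
We model the complete binary ordered tree of height `h` by identifying its
leaves with the numbers `0, …, 2^h - 1` (their `h`-bit binary expansions are
the root-to-leaf paths, the left-to-right leaf order is the numerical order).

* `lcpDepth h a b` is the depth of the meet of leaves `a` and `b`, i.e. the
  length of the longest common prefix of their `h`-bit expansions.
* The ordered isomorphism type of the minimal subtree spanned by a set `X` of
  leaves is determined by the sequence of meet-depths of consecutive leaves
  (in order); this is `lcpSeq h X`.
* `spanTree h X` is the vertex set of the minimal subtree of the binary tree
  spanned by `X`; a vertex at depth `t` is coded by the pair
  `(t, prefix-of-length-t)`, a prefix being coded as `i / 2^(h-t)`.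
-/

/-- Depth of the meet of leaves `a, b < 2^h` in the complete binary tree of
height `h` (length of the longest common prefix of the `h`-bit expansions). -/
def lcpDepth (h a b : ℕ) : ℕ := h - Nat.size (a ^^^ b)

/-- The sequence of meet-depths of consecutive leaves of `X`, which encodes
the ordered isomorphism type of the minimal subtree spanned by `X`. -/
def lcpSeq (h : ℕ) (X : Finset ℕ) : List ℕ :=
  List.zipWith (lcpDepth h) (X.sort (· ≤ ·)) (X.sort (· ≤ ·)).tail

/-- The vertex set of the minimal subtree of the complete binary tree of
height `h` spanned by the leaf set `X`. -/
def spanTree (h : ℕ) (X : Finset ℕ) : Set (ℕ × ℕ) :=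
  {q | q.1 ≤ h ∧ (∃ a ∈ X, ∃ b ∈ X, lcpDepth h a b ≤ q.1) ∧
    ∃ i ∈ X, q.2 = i / 2 ^ (h - q.1)}

/-!
Ramsey's theorem, applied to the colouring of sets of depths by the colour of the corresponding
leaves of the caterpillar (leaf `v` branching off the rightmost path at depth `v`), gives depths
`t 0 < ⋯ < t (2ℓ)` on which this colouring is constant; the ordered type of a set of caterpillar
leaves is determined by their branching depths. Let `Y` be the caterpillar leaves at
`t 0, …, t (ℓ-1)`, and let `X`, `Z` be two copies of the comb with branching depths
`t (ℓ+1), …, t (2ℓ)` whose paths part at depth `t (ℓ-1)`, `Z` to the left and `X` to the right;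
all branching inside `X` and `Z` happens deeper, so their spanned subtrees are disjoint. Then
`X ∪ Y` and `Y ∪ Z` are again combs, with branching depths `t` with `t ℓ`, resp. `t (ℓ-1)`, left
out, so each of their `r`-sets is isomorphic to an `r`-set of the caterpillar at the depths `t`.
-/

lemma Nat.size_eq_of_two_pow_le_of_lt {k x : ℕ} (h₁ : 2 ^ k ≤ x) (h₂ : x < 2 ^ (k + 1)) :
    Nat.size x = k + 1 :=
  le_antisymm (Nat.size_le.2 h₂) (Nat.lt_size.2 h₁)

lemma Nat.add_xor_add_of_two_pow_dvd {m p u v : ℕ} (hp : 2 ^ m ∣ p) (hu : u < 2 ^ m)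
    (hv : v < 2 ^ m) : (p + u) ^^^ (p + v) = u ^^^ v := by
  obtain ⟨q, rfl⟩ := hp
  apply Nat.eq_of_testBit_eq
  intro i
  rw [Nat.testBit_xor, Nat.testBit_two_pow_mul_add _ hu, Nat.testBit_two_pow_mul_add _ hv]
  by_cases hi : i < m
  · simp [hi]
  · have : (u ^^^ v).testBit i = false := Nat.testBit_lt_two_pow <|
      (Nat.xor_lt_two_pow hu hv).trans_le (Nat.pow_le_pow_right (by norm_num) (by omega))
    simp [hi, this]

lemma Nat.two_pow_le_xor_two_pow_add {k u v : ℕ} (hu : u < 2 ^ k) (hv : v < 2 ^ k) :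
    2 ^ k ≤ u ^^^ (2 ^ k + v) := by
  apply Nat.ge_two_pow_of_testBit
  rw [Nat.testBit_xor, Nat.testBit_two_pow_add_eq, Nat.testBit_lt_two_pow hu,
    Nat.testBit_lt_two_pow hv]
  rfl

lemma Nat.xor_lt_two_pow_of_div_eq {a b m : ℕ} (h : a / 2 ^ m = b / 2 ^ m) :
    a ^^^ b < 2 ^ m := by
  have hpos : 0 < 2 ^ m := Nat.two_pow_pos m
  calc a ^^^ b
      = (2 ^ m * (a / 2 ^ m) + a % 2 ^ m) ^^^ (2 ^ m * (a / 2 ^ m) + b % 2 ^ m) := by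
        rw [Nat.div_add_mod, h, Nat.div_add_mod]
    _ = (a % 2 ^ m) ^^^ (b % 2 ^ m) :=
        Nat.add_xor_add_of_two_pow_dvd (dvd_mul_right _ _) (Nat.mod_lt _ hpos)
          (Nat.mod_lt _ hpos)
    _ < 2 ^ m := Nat.xor_lt_two_pow (Nat.mod_lt _ hpos) (Nat.mod_lt _ hpos)

lemma lcpDepth_self (h a : ℕ) : lcpDepth h a a = h := by
  simp [lcpDepth]

lemma lcpDepth_comm (h a b : ℕ) : lcpDepth h a b = lcpDepth h b a := by
  rw [lcpDepth, lcpDepth, Nat.xor_comm]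

lemma le_lcpDepth_of_div_eq {h d a b : ℕ} (hd : d ≤ h)
    (hab : a / 2 ^ (h - d) = b / 2 ^ (h - d)) : d ≤ lcpDepth h a b := by
  have := Nat.size_le.2 (Nat.xor_lt_two_pow_of_div_eq hab)
  unfold lcpDepth
  omega

def SplitAt (h m a b : ℕ) : Prop := a < b ∧ lcpDepth h a b = m

lemma splitAt_add_add {h m p u v : ℕ} (hm : m < h) (hp : 2 ^ (h - m) ∣ p)
    (hu : u < 2 ^ (h - m - 1)) (hv : v < 2 ^ (h - m - 1)) :
    SplitAt h m (p + u) (p + (2 ^ (h - m - 1) + v)) := by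
  have hk : 2 ^ (h - m) = 2 ^ (h - m - 1) * 2 := by
    rw [← pow_succ]; congr 1; omega
  refine ⟨by omega, ?_⟩
  have hxor : (p + u) ^^^ (p + (2 ^ (h - m - 1) + v)) = u ^^^ (2 ^ (h - m - 1) + v) :=
    Nat.add_xor_add_of_two_pow_dvd hp (by omega) (by omega)
  have hsize : Nat.size (u ^^^ (2 ^ (h - m - 1) + v)) = h - m - 1 + 1 :=
    Nat.size_eq_of_two_pow_le_of_lt (Nat.two_pow_le_xor_two_pow_add hu hv)
      (Nat.xor_lt_two_pow (by rw [pow_succ]; omega) (by rw [pow_succ]; omega))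
  rw [lcpDepth, hxor, hsize]
  omega

/-- The leaf whose root path turns right until depth `α`, left until depth `β`, right until
depth `γ`, and left from then on. -/
def zigzagLeaf (h α β γ : ℕ) : ℕ := (2 ^ h - 2 ^ (h - α)) + (2 ^ (h - β) - 2 ^ (h - γ))

lemma zigzagLeaf_lt_two_pow {h α β γ : ℕ} (hαβ : α ≤ β) (hβγ : β ≤ γ) (hγ : γ ≤ h) :
    zigzagLeaf h α β γ < 2 ^ h := by
  have := Nat.pow_le_pow_right (n := 2) (by norm_num) (show h - β ≤ h - α by omega)
  have := Nat.pow_le_pow_right (n := 2) (by norm_num) (show h - α ≤ h by omega)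
  have := Nat.pow_le_pow_right (n := 2) (by norm_num) (show h - γ ≤ h - β by omega)
  have := Nat.two_pow_pos (h - γ)
  unfold zigzagLeaf
  omega

lemma splitAt_zigzagLeaf_of_fst_lt {h α β γ α' β' γ' : ℕ} (hαα' : α < α') (hαβ : α < β)
    (hβγ : β ≤ γ) (hγ : γ ≤ h) (hα'β' : α' ≤ β') (hβ'γ' : β' ≤ γ') (hγ' : γ' ≤ h) :
    SplitAt h α (zigzagLeaf h α β γ) (zigzagLeaf h α' β' γ') := by
  have h2 : 2 ^ (h - α) = 2 ^ (h - α - 1) * 2 := by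
    rw [← pow_succ]; congr 1; omega
  have := Nat.pow_le_pow_right (n := 2) (by norm_num) (show h - α' ≤ h - α - 1 by omega)
  have := Nat.pow_le_pow_right (n := 2) (by norm_num) (show h - β' ≤ h - α' by omega)
  have := Nat.pow_le_pow_right (n := 2) (by norm_num) (show h - γ' ≤ h - β' by omega)
  have := Nat.pow_le_pow_right (n := 2) (by norm_num) (show h - β ≤ h - α - 1 by omega)
  have := Nat.pow_le_pow_right (n := 2) (by norm_num) (show h - γ ≤ h - β by omega)
  have := Nat.pow_le_pow_right (n := 2) (by norm_num) (show h - α ≤ h by omega)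
  have := Nat.two_pow_pos (h - γ)
  have := Nat.two_pow_pos (h - γ')
  have hsplit := splitAt_add_add (p := 2 ^ h - 2 ^ (h - α)) (u := 2 ^ (h - β) - 2 ^ (h - γ))
    (v := (2 ^ (h - α - 1) - 2 ^ (h - α')) + (2 ^ (h - β') - 2 ^ (h - γ')))
    (show α < h by omega) (Nat.dvd_sub (Nat.pow_dvd_pow 2 (by omega)) dvd_rfl)
    (by omega) (by omega)
  convert hsplit using 2 <;> unfold zigzagLeaf <;> omega

lemma splitAt_zigzagLeaf_of_thd_lt {h α β γ γ' : ℕ} (hαβ : α ≤ β) (hβγ : β ≤ γ)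
    (hγγ' : γ < γ') (hγ' : γ' ≤ h) :
    SplitAt h γ (zigzagLeaf h α β γ) (zigzagLeaf h α β γ') := by
  have h2 : 2 ^ (h - γ) = 2 ^ (h - γ - 1) * 2 := by
    rw [← pow_succ]; congr 1; omega
  have := Nat.pow_le_pow_right (n := 2) (by norm_num) (show h - γ' ≤ h - γ - 1 by omega)
  have := Nat.pow_le_pow_right (n := 2) (by norm_num) (show h - γ ≤ h - β by omega)
  have := Nat.two_pow_pos (h - γ')
  have hdvd : 2 ^ (h - γ) ∣ zigzagLeaf h α β γ :=
    dvd_add (Nat.dvd_sub (Nat.pow_dvd_pow 2 (by omega)) (Nat.pow_dvd_pow 2 (by omega)))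
      (Nat.dvd_sub (Nat.pow_dvd_pow 2 (by omega)) dvd_rfl)
  have hsplit := splitAt_add_add (u := 0) (v := 2 ^ (h - γ - 1) - 2 ^ (h - γ'))
    (show γ < h by omega) hdvd (Nat.two_pow_pos _) (by omega)
  convert hsplit using 2 <;> unfold zigzagLeaf <;> omega

open Finset

lemma Finset.sort_image_of_strictMonoOn {w : ℕ → ℕ} {I : Finset ℕ} (hw : StrictMonoOn w I) :
    (I.image w).sort (· ≤ ·) = (I.sort (· ≤ ·)).map w := by
  refine List.Perm.eq_of_pairwise' (r := (· ≤ ·)) (pairwise_sort _ _) ?_ ?_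
  · rw [List.pairwise_map]
    exact (sortedLT_sort I).pairwise.imp_of_mem fun ha hb hab =>
      (hw (mem_sort _ |>.1 ha) (mem_sort _ |>.1 hb) hab).le
  · rw [← Multiset.coe_eq_coe, ← Multiset.map_coe, sort_eq, sort_eq,
      image_val_of_injOn hw.injOn]

lemma List.zipWith_tail_congr {α β : Type*} {f g : α → α → β} :
    ∀ {l : List α}, l.Pairwise (fun a b => f a b = g a b) →
      zipWith f l l.tail = zipWith g l l.tail
  | [], _ | [_], _ => rfl
  | a :: b :: l, hp => by
    obtain ⟨hab, hl⟩ := pairwise_cons.1 hp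
    simpa [hab b mem_cons_self] using zipWith_tail_congr hl

/-- The leaves `w a`, `a ∈ I`, in left-to-right order, hang off a common path, `w a` leaving
it at depth `f a`. -/
def IsComb (h : ℕ) (I : Finset ℕ) (w f : ℕ → ℕ) : Prop :=
  (∀ a ∈ I, w a < 2 ^ h) ∧ ∀ a ∈ I, ∀ b ∈ I, a < b → SplitAt h (f a) (w a) (w b)

def IsIsoInvariant {α : Type*} (h r : ℕ) (χ : Finset ℕ → α) : Prop :=
  ∀ A B : Finset ℕ, A ⊆ range (2 ^ h) → B ⊆ range (2 ^ h) → A.card = r → B.card = r →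
    lcpSeq h A = lcpSeq h B → χ A = χ B

namespace IsComb

variable {h : ℕ} {I J : Finset ℕ} {w w' f g : ℕ → ℕ}

lemma strictMonoOn (hw : IsComb h I w f) : StrictMonoOn w I :=
  fun _ ha _ hb hab => (hw.2 _ ha _ hb hab).1

lemma image_subset_range (hw : IsComb h I w f) : I.image w ⊆ range (2 ^ h) :=
  image_subset_iff.2 fun a ha => mem_range.2 (hw.1 a ha)

lemma card_image (hw : IsComb h I w f) : (I.image w).card = I.card :=
  card_image_of_injOn hw.strictMonoOn.injOn

lemma mono (hw : IsComb h I w f) (hJ : J ⊆ I) : IsComb h J w f :=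
  ⟨fun a ha => hw.1 a (hJ ha), fun a ha b hb => hw.2 a (hJ ha) b (hJ hb)⟩

lemma congr_depth (hw : IsComb h I w f) (hfg : ∀ a ∈ I, ∀ b ∈ I, a < b → f a = g a) :
    IsComb h I w g :=
  ⟨hw.1, fun a ha b hb hab => hfg a ha b hb hab ▸ hw.2 a ha b hb hab⟩

lemma comp (hw : IsComb h I w f) {σ : ℕ → ℕ} (hσ : StrictMono σ) (hJ : ∀ a ∈ J, σ a ∈ I) :
    IsComb h J (w ∘ σ) (f ∘ σ) :=
  ⟨fun a ha => hw.1 _ (hJ a ha), fun a ha b hb hab => hw.2 _ (hJ a ha) _ (hJ b hb) (hσ hab)⟩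

lemma le_lcpDepth (hw : IsComb h I w f) {m : ℕ} (hmh : m ≤ h) (hmf : ∀ a ∈ I, m ≤ f a)
    {a b : ℕ} (ha : a ∈ I) (hb : b ∈ I) : m ≤ lcpDepth h (w a) (w b) := by
  rcases lt_trichotomy a b with hab | rfl | hab
  · exact (hw.2 a ha b hb hab).2 ▸ hmf a ha
  · rwa [lcpDepth_self]
  · exact lcpDepth_comm h (w b) (w a) ▸ (hw.2 b hb a ha hab).2 ▸ hmf b hb

lemma lcpSeq_image_eq (hw : IsComb h I w f) (hw' : IsComb h I w' f) :
    lcpSeq h (I.image w) = lcpSeq h (I.image w') := by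
  unfold lcpSeq
  rw [sort_image_of_strictMonoOn hw.strictMonoOn, sort_image_of_strictMonoOn hw'.strictMonoOn,
    ← List.map_tail, ← List.map_tail, List.zipWith_map, List.zipWith_map]
  refine List.zipWith_tail_congr <| (sortedLT_sort I).pairwise.imp_of_mem fun ha hb hab => ?_
  rw [(hw.2 _ (mem_sort _ |>.1 ha) _ (mem_sort _ |>.1 hb) hab).2,
    (hw'.2 _ (mem_sort _ |>.1 ha) _ (mem_sort _ |>.1 hb) hab).2]

lemma colour_image_eq {α : Type*} {r : ℕ} {χ : Finset ℕ → α} (hχ : IsIsoInvariant h r χ)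
    (hw : IsComb h I w f) (hw' : IsComb h I w' f) (hJ : J ⊆ I) (hJr : J.card = r) :
    χ (J.image w) = χ (J.image w') :=
  hχ _ _ (hw.mono hJ).image_subset_range (hw'.mono hJ).image_subset_range
    ((hw.mono hJ).card_image.trans hJr) ((hw'.mono hJ).card_image.trans hJr)
    ((hw.mono hJ).lcpSeq_image_eq (hw'.mono hJ))

lemma colour_eq_of_reindex {α : Type*} {r N : ℕ} {χ : Finset ℕ → α} {c : α} {y t σ : ℕ → ℕ}
    (hχ : IsIsoInvariant h r χ) (hy : IsComb h (range N) y t)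
    (hc : ∀ J ⊆ range N, J.card = r → χ (J.image y) = c)
    (hw : IsComb h I w (t ∘ σ)) (hσ : StrictMono σ) (hσN : ∀ a ∈ I, σ a < N) :
    ∀ e ⊆ I.image w, e.card = r → χ e = c := by
  intro e he her
  obtain ⟨J, hJI, rfl⟩ := subset_image_iff.1 he
  have hJr : J.card = r := (hw.mono hJI).card_image ▸ her
  rw [hw.colour_image_eq hχ (hy.comp hσ fun a ha => mem_range.2 (hσN a ha)) hJI hJr,
    ← image_image]
  exact hc _ (image_subset_iff.2 fun a ha => mem_range.2 (hσN a (hJI ha)))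
    ((card_image_of_injective _ hσ.injective).trans hJr)

end IsComb

def concatAt (m : ℕ) (u v : ℕ → ℕ) (i : ℕ) : ℕ := if i < m then u i else v (i - m)

lemma image_range_concatAt (m n : ℕ) (u v : ℕ → ℕ) :
    (range (m + n)).image (concatAt m u v) = (range m).image u ∪ (range n).image v := by
  ext x
  simp only [mem_image, mem_range, mem_union, concatAt]
  constructor
  · rintro ⟨i, hi, rfl⟩
    by_cases him : i < m
    · exact .inl ⟨i, him, (if_pos him).symm⟩
    · exact .inr ⟨i - m, by omega, (if_neg him).symm⟩
  · rintro (⟨i, hi, rfl⟩ | ⟨j, hj, rfl⟩)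
    · exact ⟨i, by omega, if_pos hi⟩
    · exact ⟨m + j, by omega, by simp⟩

lemma IsComb.concat {h m n : ℕ} {u v f g : ℕ → ℕ} (hu : IsComb h (range m) u f)
    (hv : IsComb h (range n) v g) (huv : ∀ i < m, ∀ j < n, SplitAt h (f i) (u i) (v j)) :
    IsComb h (range (m + n)) (concatAt m u v) (concatAt m f g) := by
  refine ⟨fun a ha => ?_, fun a ha b hb hab => ?_⟩
  · rw [mem_range] at ha
    unfold concatAt
    split_ifs with ham
    · exact hu.1 a (mem_range.2 ham)
    · exact hv.1 _ (mem_range.2 (by omega))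
  · rw [mem_range] at ha hb
    unfold concatAt
    by_cases hbm : b < m
    · rw [if_pos (hab.trans hbm), if_pos hbm, if_pos (hab.trans hbm)]
      exact hu.2 a (mem_range.2 (hab.trans hbm)) b (mem_range.2 hbm) hab
    by_cases ham : a < m
    · rw [if_pos ham, if_neg hbm, if_pos ham]
      exact huv a ham _ (by omega)
    · rw [if_neg ham, if_neg hbm, if_neg ham]
      exact hv.2 _ (mem_range.2 (by omega)) _ (mem_range.2 (by omega)) (by omega)

def succAbove (k i : ℕ) : ℕ := if i < k then i else i + 1

lemma strictMono_succAbove (k : ℕ) : StrictMono (succAbove k) := by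
  intro a b hab
  unfold succAbove
  split_ifs <;> omega

lemma disjoint_spanTree {h m : ℕ} {X Z : Finset ℕ}
    (hX : ∀ a ∈ X, ∀ b ∈ X, m < lcpDepth h a b) (hXZ : ∀ u ∈ X, ∀ v ∈ Z, lcpDepth h u v ≤ m) :
    Disjoint (spanTree h X) (spanTree h Z) := by
  rw [Set.disjoint_left]
  rintro ⟨d, p⟩ ⟨hdh, ⟨a, ha, b, hb, hab⟩, u, hu, hpu⟩ ⟨-, -, v, hv, hpv⟩
  dsimp only at hdh hab hpu hpv
  have := le_lcpDepth_of_div_eq hdh (hpu.symm.trans hpv)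
  have := hX a ha b hb
  have := hXZ u hu v hv
  omega

lemma Finset.disjoint_image_of_forall_lt {I J : Finset ℕ} {u v : ℕ → ℕ}
    (huv : ∀ a ∈ I, ∀ b ∈ J, u a < v b) : Disjoint (I.image u) (J.image v) := by
  rw [disjoint_left]
  rintro _ hxa hxb
  obtain ⟨a, ha, rfl⟩ := mem_image.1 hxa
  obtain ⟨b, hb, hab⟩ := mem_image.1 hxb
  exact (huv a ha b hb).ne hab.symm

lemma isComb_zigzagLeaf {h α β n : ℕ} {g : ℕ → ℕ} (hαβ : α ≤ β) (hβg : ∀ j < n, β ≤ g j)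
    (hg : ∀ i j, i < j → j < n → g i < g j) (hgh : ∀ j < n, g j ≤ h) :
    IsComb h (range n) (fun j => zigzagLeaf h α β (g j)) g :=
  ⟨fun j hj => zigzagLeaf_lt_two_pow hαβ (hβg j (mem_range.1 hj)) (hgh j (mem_range.1 hj)),
    fun i _ j hj hij => splitAt_zigzagLeaf_of_thd_lt hαβ (hβg i (hij.trans (mem_range.1 hj)))
      (hg i j hij (mem_range.1 hj)) (hgh j (mem_range.1 hj))⟩

def leafY (h : ℕ) (t : ℕ → ℕ) (i : ℕ) : ℕ := zigzagLeaf h (t i) h h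

def leafX (h ℓ : ℕ) (t : ℕ → ℕ) (j : ℕ) : ℕ :=
  zigzagLeaf h (t (ℓ - 1) + 1) (t ℓ) (t (ℓ + 1 + j))

def leafZ (h ℓ : ℕ) (t : ℕ → ℕ) (j : ℕ) : ℕ := zigzagLeaf h (t (ℓ - 1)) (t ℓ) (t (ℓ + 1 + j))

section Leaves

variable {h ℓ : ℕ} {t : ℕ → ℕ}

lemma isComb_leafY (ht : ∀ i j, i < j → j ≤ 2 * ℓ → t i < t j) (hth : ∀ i ≤ 2 * ℓ, t i ≤ h) :
    IsComb h (range (2 * ℓ + 1)) (leafY h t) t := by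
  refine ⟨fun i hi => zigzagLeaf_lt_two_pow (hth i (by simpa [Nat.lt_succ_iff] using hi))
    le_rfl le_rfl, fun i _ j hj hij => ?_⟩
  have hj : j ≤ 2 * ℓ := by simpa [Nat.lt_succ_iff] using hj
  exact splitAt_zigzagLeaf_of_fst_lt (ht i j hij hj) ((ht i j hij hj).trans_le (hth j hj))
    le_rfl le_rfl (hth j hj) le_rfl le_rfl

lemma isComb_leafX (ht : ∀ i j, i < j → j ≤ 2 * ℓ → t i < t j) (hth : ∀ i ≤ 2 * ℓ, t i ≤ h) :
    IsComb h (range ℓ) (leafX h ℓ t) fun j => t (ℓ + 1 + j) := by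
  obtain rfl | hℓ := Nat.eq_zero_or_pos ℓ
  · simp [IsComb]
  exact isComb_zigzagLeaf (ht (ℓ - 1) ℓ (by omega) (by omega))
    (fun j hj => (ht ℓ _ (by omega) (by omega)).le)
    (fun i j hij hj => ht _ _ (by omega) (by omega)) (fun j hj => hth _ (by omega))

lemma isComb_leafZ (ht : ∀ i j, i < j → j ≤ 2 * ℓ → t i < t j) (hth : ∀ i ≤ 2 * ℓ, t i ≤ h) :
    IsComb h (range ℓ) (leafZ h ℓ t) fun j => t (ℓ + 1 + j) := by
  obtain rfl | hℓ := Nat.eq_zero_or_pos ℓ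
  · simp [IsComb]
  exact isComb_zigzagLeaf (ht (ℓ - 1) ℓ (by omega) (by omega)).le
    (fun j hj => (ht ℓ _ (by omega) (by omega)).le)
    (fun i j hij hj => ht _ _ (by omega) (by omega)) (fun j hj => hth _ (by omega))

lemma splitAt_leafY_leafX (ht : ∀ i j, i < j → j ≤ 2 * ℓ → t i < t j)
    (hth : ∀ i ≤ 2 * ℓ, t i ≤ h) {i j : ℕ} (hi : i < ℓ) (hj : j < ℓ) :
    SplitAt h (t i) (leafY h t i) (leafX h ℓ t j) := by
  have := ht (ℓ - 1) ℓ (by omega) (by omega)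
  have := ht ℓ (ℓ + 1 + j) (by omega) (by omega)
  have := ht i (ℓ + 1 + j) (by omega) (by omega)
  have := hth (ℓ + 1 + j) (by omega)
  have : t i ≤ t (ℓ - 1) := (eq_or_lt_of_le (show i ≤ ℓ - 1 by omega)).elim
    (fun hi => hi ▸ le_rfl) fun hi => (ht _ _ hi (by omega)).le
  exact splitAt_zigzagLeaf_of_fst_lt (by omega) (by omega) le_rfl le_rfl (by omega) (by omega)
    (by omega)

lemma splitAt_leafY_leafZ (ht : ∀ i j, i < j → j ≤ 2 * ℓ → t i < t j)
    (hth : ∀ i ≤ 2 * ℓ, t i ≤ h) {i j : ℕ} (hi : i < ℓ) (hj : j < ℓ) :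
    SplitAt h (t (succAbove (ℓ - 1) i)) (leafY h t i) (leafZ h ℓ t j) := by
  have hℓ := ht (ℓ - 1) ℓ (by omega) (by omega)
  have := ht ℓ (ℓ + 1 + j) (by omega) (by omega)
  have := hth (ℓ + 1 + j) (by omega)
  unfold succAbove
  split_ifs with hiℓ
  · have := ht i (ℓ - 1) hiℓ (by omega)
    exact splitAt_zigzagLeaf_of_fst_lt (by omega) (by omega) le_rfl le_rfl (by omega)
      (by omega) (by omega)
  · -- `leafY h t (ℓ - 1)` runs along the paths of `leafZ` down to depth `t ℓ`
    obtain rfl : i = ℓ - 1 := by omega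
    have hY : leafY h t (ℓ - 1) = zigzagLeaf h (t (ℓ - 1)) (t ℓ) (t ℓ) := by
      simp [leafY, zigzagLeaf]
    rw [hY, show ℓ - 1 + 1 = ℓ by omega]
    exact splitAt_zigzagLeaf_of_thd_lt hℓ.le le_rfl (by omega) (by omega)

lemma splitAt_leafZ_leafX (ht : ∀ i j, i < j → j ≤ 2 * ℓ → t i < t j)
    (hth : ∀ i ≤ 2 * ℓ, t i ≤ h) {i j : ℕ} (hi : i < ℓ) (hj : j < ℓ) :
    SplitAt h (t (ℓ - 1)) (leafZ h ℓ t i) (leafX h ℓ t j) := by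
  have := ht (ℓ - 1) ℓ (by omega) (by omega)
  have := ht ℓ (ℓ + 1 + i) (by omega) (by omega)
  have := ht ℓ (ℓ + 1 + j) (by omega) (by omega)
  have := hth (ℓ + 1 + i) (by omega)
  have := hth (ℓ + 1 + j) (by omega)
  exact splitAt_zigzagLeaf_of_fst_lt (by omega) (by omega) (by omega) (by omega) (by omega)
    (by omega) (by omega)

lemma isComb_concatAt_leafY_leafX (ht : ∀ i j, i < j → j ≤ 2 * ℓ → t i < t j)
    (hth : ∀ i ≤ 2 * ℓ, t i ≤ h) :
    IsComb h (range (ℓ + ℓ)) (concatAt ℓ (leafY h t) (leafX h ℓ t)) (t ∘ succAbove ℓ) := by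
  have hY := (isComb_leafY ht hth).mono (J := range ℓ) (range_subset_range.2 (by omega))
  refine (hY.concat (isComb_leafX ht hth) fun i hi j hj => splitAt_leafY_leafX ht hth hi hj
    ).congr_depth fun a _ _ _ _ => ?_
  simp only [concatAt, succAbove, Function.comp]
  split_ifs <;> first | rfl | (congr 1; omega)

lemma isComb_concatAt_leafY_leafZ (ht : ∀ i j, i < j → j ≤ 2 * ℓ → t i < t j)
    (hth : ∀ i ≤ 2 * ℓ, t i ≤ h) :
    IsComb h (range (ℓ + ℓ)) (concatAt ℓ (leafY h t) (leafZ h ℓ t))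
      (t ∘ succAbove (ℓ - 1)) := by
  have hY : IsComb h (range ℓ) (leafY h t) (t ∘ succAbove (ℓ - 1)) :=
    ((isComb_leafY ht hth).mono (range_subset_range.2 (by omega))).congr_depth
      fun a _ b hb hab => by
        have := mem_range.1 hb
        simp only [succAbove, Function.comp, if_pos (show a < ℓ - 1 by omega)]
  refine (hY.concat (isComb_leafZ ht hth) fun i hi j hj => splitAt_leafY_leafZ ht hth hi hj
    ).congr_depth fun a _ _ _ _ => ?_
  simp only [concatAt, succAbove, Function.comp]
  split_ifs <;> first | rfl | (congr 1; omega)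

end Leaves

lemma disjoint_spanTree_leafX_leafZ {h ℓ : ℕ} {t : ℕ → ℕ}
    (ht : ∀ i j, i < j → j ≤ 2 * ℓ → t i < t j) (hth : ∀ i ≤ 2 * ℓ, t i ≤ h) :
    Disjoint (spanTree h ((range ℓ).image (leafX h ℓ t)))
      (spanTree h ((range ℓ).image (leafZ h ℓ t))) := by
  refine disjoint_spanTree (m := t (ℓ - 1))
    (forall_mem_image.2 fun a ha => forall_mem_image.2 fun b hb => ?_)
    (forall_mem_image.2 fun u hu => forall_mem_image.2 fun v hv => ?_)
  · have hℓ := mem_range.1 ha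
    refine (ht (ℓ - 1) (ℓ + 1) (by omega) (by omega)).trans_le
      ((isComb_leafX ht hth).le_lcpDepth (hth _ (by omega)) (fun j hj => ?_) ha hb)
    rcases Nat.eq_zero_or_pos j with rfl | hj0
    · rfl
    · exact (ht _ _ (by omega) (by have := mem_range.1 hj; omega)).le
  · rw [lcpDepth_comm, (splitAt_leafZ_leafX ht hth (mem_range.1 hv) (mem_range.1 hu)).2]

theorem exists_sets_of_monochromatic_leafY {α : Type*} {r ℓ h : ℕ} {t : ℕ → ℕ}
    {χ : Finset ℕ → α} {c : α} (hχ : IsIsoInvariant h r χ)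
    (ht : ∀ i j, i < j → j ≤ 2 * ℓ → t i < t j) (hth : ∀ i ≤ 2 * ℓ, t i ≤ h)
    (hc : ∀ J ⊆ range (2 * ℓ + 1), J.card = r → χ (J.image (leafY h t)) = c) :
    ∃ X Y Z : Finset ℕ,
      X ⊆ Finset.range (2 ^ h) ∧ Y ⊆ Finset.range (2 ^ h) ∧
        Z ⊆ Finset.range (2 ^ h) ∧
      X.card = ℓ ∧ Y.card = ℓ ∧ Z.card = ℓ ∧
      Disjoint X Y ∧ Disjoint X Z ∧ Disjoint Y Z ∧
      lcpSeq h X = lcpSeq h Z ∧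
      Disjoint (spanTree h X) (spanTree h Z) ∧
      ∃ c : α, (∀ e ⊆ X ∪ Y, e.card = r → χ e = c) ∧
        (∀ e ⊆ Y ∪ Z, e.card = r → χ e = c) := by
  have hY := isComb_leafY ht hth
  have hYℓ := hY.mono (J := range ℓ) (range_subset_range.2 (by omega))
  have hX := isComb_leafX ht hth
  have hZ := isComb_leafZ ht hth
  have hσ : ∀ k ≤ ℓ, ∀ a ∈ range (ℓ + ℓ), succAbove k a < 2 * ℓ + 1 := fun k hk a ha => by
    have := mem_range.1 ha
    unfold succAbove
    split_ifs <;> omega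
  refine ⟨(range ℓ).image (leafX h ℓ t), (range ℓ).image (leafY h t),
    (range ℓ).image (leafZ h ℓ t), hX.image_subset_range, hYℓ.image_subset_range,
    hZ.image_subset_range, by rw [hX.card_image, card_range], by rw [hYℓ.card_image, card_range],
    by rw [hZ.card_image, card_range],
    (disjoint_image_of_forall_lt fun i hi j hj =>
      (splitAt_leafY_leafX ht hth (mem_range.1 hi) (mem_range.1 hj)).1).symm,
    (disjoint_image_of_forall_lt fun i hi j hj =>
      (splitAt_leafZ_leafX ht hth (mem_range.1 hi) (mem_range.1 hj)).1).symm,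
    disjoint_image_of_forall_lt fun i hi j hj =>
      (splitAt_leafY_leafZ ht hth (mem_range.1 hi) (mem_range.1 hj)).1,
    hX.lcpSeq_image_eq hZ, disjoint_spanTree_leafX_leafZ ht hth, c, ?_, ?_⟩
  · rw [union_comm, ← image_range_concatAt]
    exact hY.colour_eq_of_reindex hχ hc (isComb_concatAt_leafY_leafX ht hth)
      (strictMono_succAbove ℓ) (hσ ℓ le_rfl)
  · rw [← image_range_concatAt]
    exact hY.colour_eq_of_reindex hχ hc (isComb_concatAt_leafY_leafZ ht hth)
      (strictMono_succAbove _) (hσ _ (by omega))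

lemma Finset.exists_strictMonoOn_of_card {β : Type*} [LinearOrder β] {A : Finset β} {n : ℕ}
    (hA : A.card = n + 1) :
    ∃ τ : ℕ → β, StrictMonoOn τ (Set.Iic n) ∧ ∀ i, τ i ∈ A :=
  ⟨fun i => A.orderEmbOfFin hA ⟨min i n, by omega⟩,
    fun i hi j hj hij => (A.orderEmbOfFin hA).strictMono <| by
      simp only [Set.mem_Iic] at hi hj
      simp only [Fin.mk_lt_mk]
      omega,
    fun _ => A.orderEmbOfFin_mem hA _⟩

theorem stmt5_general (r ℓ s h : ℕ)
    (hRamsey : ∀ c : Finset (Fin (h + 1)) → Fin s, ∃ A : Finset (Fin (h + 1)),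
      A.card = 2 * ℓ + 1 ∧ ∃ col : Fin s, ∀ e ⊆ A, e.card = r → c e = col)
    (χ : Finset ℕ → Fin s)
    (hiso : ∀ A B : Finset ℕ, A ⊆ Finset.range (2 ^ h) →
      B ⊆ Finset.range (2 ^ h) → A.card = r → B.card = r →
      lcpSeq h A = lcpSeq h B → χ A = χ B) :
    ∃ X Y Z : Finset ℕ,
      X ⊆ Finset.range (2 ^ h) ∧ Y ⊆ Finset.range (2 ^ h) ∧
        Z ⊆ Finset.range (2 ^ h) ∧
      X.card = ℓ ∧ Y.card = ℓ ∧ Z.card = ℓ ∧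
      Disjoint X Y ∧ Disjoint X Z ∧ Disjoint Y Z ∧
      lcpSeq h X = lcpSeq h Z ∧
      Disjoint (spanTree h X) (spanTree h Z) ∧
      ∃ c : Fin s, (∀ e ⊆ X ∪ Y, e.card = r → χ e = c) ∧
        (∀ e ⊆ Y ∪ Z, e.card = r → χ e = c) := by
  classical
  obtain ⟨A, hA, c, hc⟩ :=
    hRamsey fun E => χ (E.image fun v : Fin (h + 1) => zigzagLeaf h v h h)
  obtain ⟨τ, hτ, hτA⟩ := exists_strictMonoOn_of_card hA
  refine exists_sets_of_monochromatic_leafY (t := fun i => τ i) (c := c) hiso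
    (fun i j hij hj => hτ (Set.mem_Iic.2 (by omega)) (Set.mem_Iic.2 hj) hij)
    (fun i _ => (τ i).is_le) fun J hJ hJr => ?_
  have hJ' : (J : Set ℕ) ⊆ Set.Iic (2 * ℓ) := fun i hi => by
    simpa [Nat.lt_succ_iff] using hJ hi
  rw [show J.image (leafY h fun i => τ i)
      = (J.image τ).image fun v : Fin (h + 1) => zigzagLeaf h v h h by rw [image_image]; rfl]
  exact hc _ (image_subset_iff.2 fun i _ => hτA i)
    ((card_image_of_injOn (hτ.injOn.mono hJ')).trans hJr)

/-- Given an s-colouring of the r-subsets of the leaves of the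
complete binary ordered tree of height h that is invariant under ordered
subtree isomorphism, and assuming the Ramsey hypothesis on h, there are
pairwise disjoint ℓ-sets of leaves X, Y, Z such that the minimal subtrees
spanned by X and Z are isomorphic ordered trees and vertex-disjoint, and all
r-subsets of X ∪ Y and of Y ∪ Z have one and the same colour. -/
theorem stmt5 (r ℓ s h d : ℕ) (hr : 1 ≤ r) (hs : 1 ≤ s) (hd : 1 ≤ d)
    (hrl : r ≤ ℓ)
    (hRamsey : ∀ c : Finset (Fin (h + 1)) → Fin s, ∃ A : Finset (Fin (h + 1)),
      A.card = 2 * ℓ + 1 ∧ ∃ col : Fin s, ∀ e ⊆ A, e.card = r → c e = col)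
    (χ : Finset ℕ → Fin s)
    (hiso : ∀ A B : Finset ℕ, A ⊆ Finset.range (2 ^ h) →
      B ⊆ Finset.range (2 ^ h) → A.card = r → B.card = r →
      lcpSeq h A = lcpSeq h B → χ A = χ B) :
    ∃ X Y Z : Finset ℕ,
      X ⊆ Finset.range (2 ^ h) ∧ Y ⊆ Finset.range (2 ^ h) ∧
        Z ⊆ Finset.range (2 ^ h) ∧
      X.card = ℓ ∧ Y.card = ℓ ∧ Z.card = ℓ ∧
      Disjoint X Y ∧ Disjoint X Z ∧ Disjoint Y Z ∧
      lcpSeq h X = lcpSeq h Z ∧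
      Disjoint (spanTree h X) (spanTree h Z) ∧
      ∃ c : Fin s, (∀ e ⊆ X ∪ Y, e.card = r → χ e = c) ∧
        (∀ e ⊆ Y ∪ Z, e.card = r → χ e = c) :=
  stmt5_general r ℓ s h hRamsey χ hiso
end

section
/- Let D ≥ 3d(h + 1) (more generally, d, h ≪ D). Let T₁ and T₂ be D-ary ordered trees of height h on (possibly overlapping) vertex sets, with distinct roots. Then there exist d-ary subtrees T₁' ⊆ T₁ and T₂' ⊆ T₂, each of height h, such that T₁' and T₂' are vertex-disjoint. -/
/-- Positions (vertices) of the complete D-ary tree of height h: sequences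
over `Fin D` of length at most `h`. -/
def TreePos (D h : ℕ) : Type := (k : Fin (h + 1)) × (Fin (k : ℕ) → Fin D)

/-- The root position. -/
def TreePos.root (D h : ℕ) : TreePos D h := ⟨⟨0, Nat.succ_pos h⟩, fun i => i.elim0⟩

/-- `p` is a prefix (ancestor-or-equal) of `q`. -/
def TreePos.Pfx {D h : ℕ} (p q : TreePos D h) : Prop :=
  ∃ hle : (p.1 : ℕ) ≤ (q.1 : ℕ), ∀ i : Fin (p.1 : ℕ), q.2 (Fin.castLE hle i) = p.2 i

/-- A d-ary subtree of height h of the complete D-ary tree of height h,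
given as a depth-preserving, ancestry-preserving (and hence injective)
embedding of positions. -/
structure SubtreeEmb (d D h : ℕ) where
  toFun : TreePos d h → TreePos D h
  depth_eq : ∀ p, ((toFun p).1 : ℕ) = (p.1 : ℕ)
  pfx_iff : ∀ p q, TreePos.Pfx p q ↔ TreePos.Pfx (toFun p) (toFun q)

/-!
It suffices to choose `d` of the `D` children of every internal vertex of each tree so that no
chosen child in one tree is a chosen child or the root of the other: every vertex of the subtrees
spanned by these choices is a root or a chosen child, and the roots differ. Such choices exist by
Hall's theorem as soon as `D ≥ 2d + 1`. The children of distinct vertices of one tree are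
distinct, so `k` requests (a vertex and one of its `d` slots) involve at least `k / d` vertices,
at least `k / 2d` of them in the same tree, and these have at least `(k / 2d) (D - 1) ≥ k`
admissible children.
-/

open Finset Function

section Hall

variable {ι κ V : Type*} [DecidableEq V]

theorem Finset.card_mul_le_card_biUnion {s : Finset ι} {A : ι → Finset V} {n : ℕ}
    (hs : (s : Set ι).PairwiseDisjoint A) (hA : ∀ i ∈ s, n ≤ #(A i)) :
    #s * n ≤ #(s.biUnion A) := by
  rw [card_biUnion hs, ← smul_eq_mul]
  exact card_nsmul_le_sum s _ n hA

theorem exists_injective_of_two_disjoint_families {A : ι ⊕ κ → Finset V} {d n : ℕ}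
    (hl : Pairwise (Disjoint on fun i => A (.inl i)))
    (hr : Pairwise (Disjoint on fun k => A (.inr k)))
    (hA : ∀ x, n ≤ #(A x)) (hdn : 2 * d ≤ n) :
    ∃ f : (ι ⊕ κ) × Fin d → V, Injective f ∧ ∀ x, f x ∈ A x.1 := by
  classical
  refine (all_card_le_biUnion_card_iff_exists_injective _).mp fun s => ?_
  set T := s.image Prod.fst
  have hsT : #s ≤ #T * d := by
    calc #s ≤ #(T ×ˢ (univ : Finset (Fin d))) :=
          card_le_card fun x hx => mem_product.mpr ⟨mem_image_of_mem _ hx, mem_univ _⟩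
      _ = #T * d := by rw [card_product, card_univ, Fintype.card_fin]
  have hUnion : s.biUnion (fun x => A x.1) = T.biUnion A := by rw [image_biUnion]
  have hL : #T.toLeft * n ≤ #(T.biUnion A) := by
    calc #T.toLeft * n ≤ #(T.toLeft.biUnion fun i => A (.inl i)) :=
          card_mul_le_card_biUnion (fun i _ j _ hij => hl hij) fun i _ => hA _
      _ ≤ #(T.biUnion A) := card_le_card fun v => by simp only [mem_biUnion, mem_toLeft]; grind
  have hR : #T.toRight * n ≤ #(T.biUnion A) := by
    calc #T.toRight * n ≤ #(T.toRight.biUnion fun k => A (.inr k)) :=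
          card_mul_le_card_biUnion (fun i _ j _ hij => hr hij) fun i _ => hA _
      _ ≤ #(T.biUnion A) := card_le_card fun v => by simp only [mem_biUnion, mem_toRight]; grind
  have hT := card_toLeft_add_card_toRight (u := T)
  rw [hUnion]
  nlinarith

end Hall

namespace TreePos

variable {D h : ℕ}

theorem pfx_mk_iff {k k' : Fin (h + 1)} {f : Fin k → Fin D} {f' : Fin k' → Fin D} :
    Pfx (⟨k, f⟩ : TreePos D h) ⟨k', f'⟩ ↔ ∃ hle : (k : ℕ) ≤ k', f' ∘ Fin.castLE hle = f := by
  simp only [Pfx, funext_iff, comp_apply]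

end TreePos

abbrev InternalPos (D h : ℕ) : Type := (k : Fin h) × (Fin (k : ℕ) → Fin D)

namespace InternalPos

variable {D h : ℕ}

def child (p : InternalPos D h) (j : Fin D) : TreePos D h :=
  ⟨⟨p.1 + 1, Nat.succ_lt_succ p.1.isLt⟩, Fin.snoc p.2 j⟩

theorem child_inj {p p' : InternalPos D h} {j j' : Fin D} :
    p.child j = p'.child j' ↔ p = p' ∧ j = j' := by
  refine ⟨fun he => ?_, by rintro ⟨rfl, rfl⟩; rfl⟩
  obtain ⟨⟨k, hk⟩, f⟩ := p
  obtain ⟨⟨k', hk'⟩, f'⟩ := p'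
  obtain rfl : k = k' := by
    simpa [child] using congrArg (fun q : TreePos D h => (q.1 : ℕ)) he
  have hsnoc : (Fin.snoc f j : Fin (k + 1) → Fin D) = Fin.snoc f' j' :=
    eq_of_heq (Sigma.mk.inj_iff.mp he).2
  obtain ⟨rfl, rfl⟩ := Fin.snoc_injective2 hsnoc
  exact ⟨rfl, rfl⟩

section ChildChoice

variable {V : Type*} [DecidableEq V]

def childVerts (t : TreePos D h → V) (p : InternalPos D h) : Finset V :=
  univ.image fun j => t (p.child j)

theorem card_childVerts {t : TreePos D h → V} (ht : Injective t) (p : InternalPos D h) :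
    #(childVerts t p) = D := by
  rw [childVerts, card_image_of_injective _ fun j j' hj => (child_inj.mp (ht hj)).2, card_univ,
    Fintype.card_fin]

theorem pairwise_disjoint_childVerts {t : TreePos D h → V} (ht : Injective t) :
    Pairwise (Disjoint on childVerts t) := by
  intro p p' hp
  simp only [onFun, childVerts, disjoint_left, mem_image, mem_univ, true_and]
  rintro _ ⟨j, rfl⟩ ⟨j', hj'⟩
  exact hp (child_inj.mp (ht hj')).1.symm

theorem exists_childChoice {d : ℕ} (t : TreePos D h → V) (g : InternalPos D h × Fin d → V)
    (hg : Injective g) (hmem : ∀ x, g x ∈ childVerts t x.1) :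
    ∃ σ : InternalPos D h → Fin d ↪ Fin D, ∀ p a, t (p.child (σ p a)) = g (p, a) := by
  choose σ hσ using fun x => by simpa [childVerts] using hmem x
  refine ⟨fun p => ⟨fun a => σ (p, a), fun a a' ha => ?_⟩, fun p a => hσ (p, a)⟩
  have hga : g (p, a) = g (p, a') := by
    rw [← hσ, ← hσ]
    exact congrArg (fun j => t (p.child j)) ha
  exact (Prod.ext_iff.mp (hg hga)).2

theorem exists_disjoint_childChoices {d : ℕ} (h2d : 2 * d < D) {t₁ t₂ : TreePos D h → V}
    (h₁ : Injective t₁) (h₂ : Injective t₂) :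
    ∃ σ₁ σ₂ : InternalPos D h → Fin d ↪ Fin D,
      (∀ (p : InternalPos D h) a, t₁ (p.child (σ₁ p a)) ≠ t₂ (TreePos.root D h)) ∧
      (∀ (q : InternalPos D h) b, t₂ (q.child (σ₂ q b)) ≠ t₁ (TreePos.root D h)) ∧
      ∀ (p : InternalPos D h) a (q : InternalPos D h) b,
        t₁ (p.child (σ₁ p a)) ≠ t₂ (q.child (σ₂ q b)) := by
  let A : InternalPos D h ⊕ InternalPos D h → Finset V :=
    Sum.elim (fun p => (childVerts t₁ p).erase (t₂ (TreePos.root D h)))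
      (fun q => (childVerts t₂ q).erase (t₁ (TreePos.root D h)))
  have hcard : ∀ x, D - 1 ≤ #(A x) := by
    rintro (p | q)
    · simpa [A, card_childVerts h₁] using pred_card_le_card_erase (s := childVerts t₁ p)
    · simpa [A, card_childVerts h₂] using pred_card_le_card_erase (s := childVerts t₂ q)
  obtain ⟨f, hf, hfA⟩ := exists_injective_of_two_disjoint_families (A := A) (d := d) (n := D - 1)
    (fun _ _ hp => (pairwise_disjoint_childVerts h₁ hp).mono (erase_subset _ _) (erase_subset _ _))
    (fun _ _ hq => (pairwise_disjoint_childVerts h₂ hq).mono (erase_subset _ _) (erase_subset _ _))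
    hcard (by omega)
  obtain ⟨σ₁, hσ₁⟩ := exists_childChoice t₁ (f ∘ Prod.map .inl id)
    (hf.comp (Sum.inl_injective.prodMap injective_id))
    fun x => mem_of_mem_erase (hfA (.inl x.1, x.2))
  obtain ⟨σ₂, hσ₂⟩ := exists_childChoice t₂ (f ∘ Prod.map .inr id)
    (hf.comp (Sum.inr_injective.prodMap injective_id))
    fun x => mem_of_mem_erase (hfA (.inr x.1, x.2))
  refine ⟨σ₁, σ₂, fun p a => ?_, fun q b => ?_, fun p a q b => ?_⟩
  · rw [hσ₁]; exact ne_of_mem_erase (hfA (.inl p, a))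
  · rw [hσ₂]; exact ne_of_mem_erase (hfA (.inr q, b))
  · rw [hσ₁, hσ₂]; exact hf.ne (by simp)

end ChildChoice

end InternalPos

namespace SubtreeEmb

section Selection

variable {d D : ℕ} (c : (k : ℕ) → (Fin k → Fin D) → Fin d ↪ Fin D)

/-- The address in the `D`-ary tree of the vertex with address `f` in the `d`-ary tree, when the
retained children of the vertex with address `g` are the `c k g a`, `a : Fin d`. -/
def liftAddr : (k : ℕ) → (Fin k → Fin d) → Fin k → Fin D
  | 0, _ => Fin.elim0
  | k + 1, f =>
    Fin.snoc (liftAddr k (Fin.init f)) (c k (liftAddr k (Fin.init f)) (f (Fin.last k)))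

theorem liftAddr_comp_castLE {k k' : ℕ} (hk : k ≤ k') (f : Fin k' → Fin d) :
    liftAddr c k' f ∘ Fin.castLE hk = liftAddr c k (f ∘ Fin.castLE hk) := by
  induction k' generalizing k with
  | zero => obtain rfl := Nat.le_zero.mp hk; exact funext fun i => i.elim0
  | succ m ih =>
    rcases Nat.of_le_succ hk with hkm | rfl
    · have hcast : Fin.castLE hk = Fin.castSucc ∘ Fin.castLE hkm := rfl
      rw [hcast, ← comp_assoc]
      simp only [liftAddr, Fin.snoc_comp_castSucc]
      rw [ih hkm]
      rfl
    · rfl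

theorem liftAddr_injective (k : ℕ) : Injective (liftAddr c k) := by
  induction k with
  | zero => exact fun _ _ _ => Subsingleton.elim _ _
  | succ k ih =>
    intro f f' he
    obtain ⟨hinit, hlast⟩ := Fin.snoc_injective2 he
    have hinit' := ih hinit
    rw [hinit'] at hlast
    rw [← Fin.snoc_init_self f, ← Fin.snoc_init_self f', hinit', (c _ _).injective hlast]

def ofSelection (h : ℕ) : SubtreeEmb d D h where
  toFun p := ⟨p.1, liftAddr c p.1 p.2⟩
  depth_eq _ := rfl
  pfx_iff := by
    rintro ⟨k, f⟩ ⟨k', f'⟩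
    refine TreePos.pfx_mk_iff.trans <| .trans (exists_congr fun hle => ?_) TreePos.pfx_mk_iff.symm
    rw [liftAddr_comp_castLE, (liftAddr_injective c _).eq_iff]

theorem ofSelection_eq_root_or_child {h : ℕ} (p : TreePos d h) :
    (ofSelection c h).toFun p = TreePos.root D h ∨
      ∃ (q : InternalPos D h) (a : Fin d), (ofSelection c h).toFun p = q.child (c q.1 q.2 a) := by
  obtain ⟨⟨_ | m, hm⟩, g⟩ := p
  · exact .inl rfl
  · exact .inr
      ⟨⟨⟨m, Nat.succ_lt_succ_iff.mp hm⟩, liftAddr c m (Fin.init g)⟩, g (Fin.last m), rfl⟩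

end Selection

variable {d D h : ℕ}

/-- Uses the choice `σ` at the internal vertices; the choice at the leaves is irrelevant. -/
def ofChildChoice (hdD : d ≤ D) (σ : InternalPos D h → Fin d ↪ Fin D) : SubtreeEmb d D h :=
  ofSelection (fun k g => if hk : k < h then σ ⟨⟨k, hk⟩, g⟩ else Fin.castLEEmb hdD) h

theorem ofChildChoice_eq_root_or_child (hdD : d ≤ D) (σ : InternalPos D h → Fin d ↪ Fin D)
    (p : TreePos d h) :
    (ofChildChoice hdD σ).toFun p = TreePos.root D h ∨
      ∃ (q : InternalPos D h) (a : Fin d), (ofChildChoice hdD σ).toFun p = q.child (σ q a) := by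
  rcases ofSelection_eq_root_or_child _ p with hp | ⟨q, a, hp⟩
  · exact .inl hp
  · refine .inr ⟨q, a, ?_⟩
    rw [ofChildChoice, hp, dif_pos q.1.isLt]

theorem disjoint_range_ofChildChoice {V : Type*} {t₁ t₂ : TreePos D h → V} (hdD : d ≤ D)
    {σ₁ σ₂ : InternalPos D h → Fin d ↪ Fin D}
    (hroot : t₁ (TreePos.root D h) ≠ t₂ (TreePos.root D h))
    (h₁ : ∀ (p : InternalPos D h) a, t₁ (p.child (σ₁ p a)) ≠ t₂ (TreePos.root D h))
    (h₂ : ∀ (q : InternalPos D h) b, t₂ (q.child (σ₂ q b)) ≠ t₁ (TreePos.root D h))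
    (h₁₂ : ∀ (p : InternalPos D h) a (q : InternalPos D h) b,
      t₁ (p.child (σ₁ p a)) ≠ t₂ (q.child (σ₂ q b))) :
    Disjoint (Set.range (t₁ ∘ (ofChildChoice hdD σ₁).toFun))
      (Set.range (t₂ ∘ (ofChildChoice hdD σ₂).toFun)) := by
  rw [Set.disjoint_left]
  rintro _ ⟨p, rfl⟩ ⟨q, hq⟩
  rcases ofChildChoice_eq_root_or_child hdD σ₁ p with hp | ⟨p', a, hp⟩ <;>
    rcases ofChildChoice_eq_root_or_child hdD σ₂ q with hq' | ⟨q', b, hq'⟩ <;>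
    simp only [comp_apply, hp, hq'] at hq
  exacts [hroot hq.symm, h₂ q' b hq, h₁ p' a hq.symm, h₁₂ p' a q' b hq.symm]

end SubtreeEmb

/-- If D ≥ 3d(h+1), then any two D-ary ordered trees of height h
(labelled injectively in a common vertex set, with distinct roots) contain
vertex-disjoint d-ary subtrees of height h. -/
theorem stmt6 {V : Type*} (d D h : ℕ) (hd : 1 ≤ d) (hD : 3 * d * (h + 1) ≤ D)
    (t₁ t₂ : TreePos D h → V)
    (h₁ : Function.Injective t₁) (h₂ : Function.Injective t₂)
    (hroot : t₁ (TreePos.root D h) ≠ t₂ (TreePos.root D h)) :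
    ∃ e₁ e₂ : SubtreeEmb d D h,
      Disjoint (Set.range (t₁ ∘ e₁.toFun)) (Set.range (t₂ ∘ e₂.toFun)) := by
  classical
  have h2d : 2 * d < D := by nlinarith
  obtain ⟨σ₁, σ₂, hσ₁, hσ₂, hσ₁₂⟩ := InternalPos.exists_disjoint_childChoices h2d h₁ h₂
  exact ⟨_, _, SubtreeEmb.disjoint_range_ofChildChoice (by omega) hroot hσ₁ hσ₂ hσ₁₂⟩
end

section
/- Let G be a graph with maximum degree Δ, and suppose d, h, Δ ≪ D (explicitly, it suffices that there is a chain d = d_{Δ+1} ≪ d_Δ ≪ ... ≪ d_0 = D where each step allows the two-tree untangling lemma). For each vertex u of G let T(u) be a D-ary ordered tree of height h with vertex set contained in some ground set, all roots distinct. Then there exist d-ary subtrees T'(u) ⊆ T(u) of height h such that for every edge uv of G, T'(u) and T'(v) are vertex-disjoint. -/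
open Finset

instance (D h : ℕ) : Fintype (TreePos D h) :=
  inferInstanceAs (Fintype ((k : Fin (h + 1)) × (Fin (k : ℕ) → Fin D)))

lemma Finset.exists_fin_embedding_notMem {α : Type*} [Fintype α] [DecidableEq α] {d : ℕ}
    (s : Finset α) (hs : s.card + d ≤ Fintype.card α) :
    ∃ g : Fin d ↪ α, ∀ j, g j ∉ s := by
  obtain ⟨r, hr, rfl⟩ := exists_subset_card_eq (s := sᶜ) (n := d) (by rw [card_compl]; omega)
  exact ⟨r.equivFin.symm.toEmbedding.trans (Function.Embedding.subtype _),
    fun j => mem_compl.1 (hr (r.equivFin.symm j).2)⟩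

namespace SubtreeEmb

variable {d D h : ℕ}

lemma apply_castLE_of_apply_castSucc (F : ∀ m, (Fin m → Fin d) → Fin m → Fin D)
    (hF : ∀ m u i, F (m + 1) u (Fin.castSucc i) = F m (Fin.init u) i)
    {a b : ℕ} (hab : a ≤ b) (u : Fin b → Fin d) (i : Fin a) :
    F b u (Fin.castLE hab i) = F a (fun j => u (Fin.castLE hab j)) i := by
  induction b, hab using Nat.le_induction with
  | base => rfl
  | succ b hab ih => exact (hF b u (Fin.castLE hab i)).trans (ih _)

def ofSeqMap (F : ∀ m, (Fin m → Fin d) → Fin m → Fin D)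
    (hF : ∀ m u i, F (m + 1) u (Fin.castSucc i) = F m (Fin.init u) i)
    (hinj : ∀ m, Function.Injective (F m)) : SubtreeEmb d D h where
  toFun p := ⟨p.1, F p.1 p.2⟩
  depth_eq _ := rfl
  pfx_iff p q := by
    constructor
    · rintro ⟨hle, hpq⟩
      refine ⟨hle, fun i => ?_⟩
      change F q.1 q.2 (Fin.castLE hle i) = F p.1 p.2 i
      rw [apply_castLE_of_apply_castSucc F hF hle, funext hpq]
    · rintro ⟨hle, hpq⟩
      refine ⟨hle, congrFun (hinj p.1 (funext fun i => ?_))⟩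
      rw [← apply_castLE_of_apply_castSucc F hF hle]
      exact hpq i

-- `pick m w` lists the children kept below the node `w` at depth `m`.
def liftSeq (pick : ∀ m, (Fin m → Fin D) → Fin d ↪ Fin D) :
    ∀ m, (Fin m → Fin d) → Fin m → Fin D
  | 0, _ => Fin.elim0
  | m + 1, u => Fin.snoc (liftSeq pick m (Fin.init u))
      (pick m (liftSeq pick m (Fin.init u)) (u (Fin.last m)))

lemma liftSeq_castSucc (pick : ∀ m, (Fin m → Fin D) → Fin d ↪ Fin D) (m : ℕ)
    (u : Fin (m + 1) → Fin d) (i : Fin m) :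
    liftSeq pick (m + 1) u (Fin.castSucc i) = liftSeq pick m (Fin.init u) i := by
  simp only [liftSeq, Fin.snoc_castSucc]

lemma liftSeq_injective (pick : ∀ m, (Fin m → Fin D) → Fin d ↪ Fin D) :
    ∀ m, Function.Injective (liftSeq pick m)
  | 0 => fun _ _ _ => funext fun i => i.elim0
  | m + 1 => fun u v huv => by
    obtain ⟨hinit, hlast⟩ := Fin.snoc_injective2 huv
    have hinit : Fin.init u = Fin.init v := liftSeq_injective pick m hinit
    rw [hinit] at hlast
    rw [← Fin.snoc_init_self u, ← Fin.snoc_init_self v, hinit, (pick m _).injective hlast]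

theorem exists_avoiding (B : Finset (TreePos D h)) (hroot : TreePos.root D h ∉ B)
    (hB : B.card + d ≤ D) : ∃ e : SubtreeEmb d D h, ∀ p, e.toFun p ∉ B := by
  classical
  have hchild : ∀ m (w : Fin m → Fin D), ∃ g : Fin d ↪ Fin D,
      ∀ j (hm : m + 1 < h + 1),
        (⟨⟨m + 1, hm⟩, Fin.snoc w (g j)⟩ : TreePos D h) ∉ B := by
    intro m w
    by_cases hm : m + 1 < h + 1
    · let child : Fin D → TreePos D h := fun a => ⟨⟨m + 1, hm⟩, Fin.snoc w a⟩
      have hcard : (univ.filter (child · ∈ B)).card ≤ B.card :=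
        card_le_card_of_injOn child (fun a ha => (mem_filter.1 ha).2)
          fun a _ b _ hab => Fin.snoc_right_injective (α := fun _ => Fin D) w
            (eq_of_heq (Sigma.mk.inj hab).2)
      obtain ⟨g, hg⟩ := exists_fin_embedding_notMem (d := d) (univ.filter (child · ∈ B))
        (by rw [Fintype.card_fin]; omega)
      exact ⟨g, fun j _ hj => hg j (mem_filter.2 ⟨mem_univ _, hj⟩)⟩
    · obtain ⟨g, -⟩ := exists_fin_embedding_notMem (d := d) (∅ : Finset (Fin D))
        (by rw [Fintype.card_fin, card_empty]; omega)
      exact ⟨g, fun _ hm' => absurd hm' hm⟩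
  choose pick hpick using hchild
  refine ⟨ofSeqMap (liftSeq pick) (liftSeq_castSucc pick) (liftSeq_injective pick), ?_⟩
  rintro ⟨⟨_ | m, hm⟩, u⟩
  · exact hroot
  · exact hpick m _ (u (Fin.last m)) hm

end SubtreeEmb

section Untangling

variable {U W : Type*} {d D h Δ : ℕ}

theorem SubtreeEmb.exists_labels_avoiding (t : TreePos D h → W) (ht : Function.Injective t)
    (L : Finset W) (hroot : t (TreePos.root D h) ∉ L) (hL : L.card + d ≤ D) :
    ∃ e : SubtreeEmb d D h, ∀ p, t (e.toFun p) ∉ L := by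
  classical
  have hcard : (univ.filter (t · ∈ L)).card ≤ L.card :=
    card_le_card_of_injOn t (fun p hp => (mem_filter.1 hp).2) ht.injOn
  obtain ⟨e, he⟩ := SubtreeEmb.exists_avoiding (d := d) (univ.filter (t · ∈ L))
    (by simpa using hroot) (by omega)
  exact ⟨e, fun p hp => he p (mem_filter.2 ⟨mem_univ _, hp⟩)⟩

variable [Fintype U] (G : SimpleGraph U) (t : U → TreePos D h → W)

theorem SubtreeEmb.exists_avoiding_neighbors (a : U) (hdeg : (G.neighborSet a).ncard ≤ Δ)
    (hinj : Function.Injective (t a))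
    (hroots : ∀ u v : U, u ≠ v → t u (TreePos.root D h) ≠ t v (TreePos.root D h))
    (hD : Δ * (Fintype.card (TreePos d h) + 1) + d ≤ D)
    (e : U → SubtreeEmb d D h) (S : Finset U)
    (hS : ∀ v ∈ S, G.Adj v a → t a (TreePos.root D h) ∉ Set.range (t v ∘ (e v).toFun)) :
    ∃ ea : SubtreeEmb d D h,
      (∀ v ∈ S, G.Adj a v →
        Disjoint (Set.range (t a ∘ ea.toFun)) (Set.range (t v ∘ (e v).toFun))) ∧
      ∀ v, G.Adj a v → t v (TreePos.root D h) ∉ Set.range (t a ∘ ea.toFun) := by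
  classical
  set L : Finset W := ((G.neighborFinset a ∩ S).biUnion fun v => univ.image (t v ∘ (e v).toFun))
    ∪ (G.neighborFinset a).image fun v => t v (TreePos.root D h)
  have hdeg' : (G.neighborFinset a).card ≤ Δ :=
    (Set.ncard_eq_toFinset_card' _).symm.trans_le hdeg
  have hL : L.card + d ≤ D := by
    calc L.card + d
        ≤ (G.neighborFinset a ∩ S).card * Fintype.card (TreePos d h)
            + (G.neighborFinset a).card + d := by
          gcongr
          exact (card_union_le _ _).trans <| add_le_add
            (card_biUnion_le_card_mul _ _ _ fun _ _ => card_image_le) card_image_le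
      _ ≤ Δ * Fintype.card (TreePos d h) + Δ + d := by
          gcongr
          exact (card_le_card inter_subset_left).trans hdeg'
      _ ≤ D := by rw [Nat.mul_succ] at hD; exact hD
  have hroot : t a (TreePos.root D h) ∉ L := by
    simp only [L, mem_union, mem_biUnion, mem_inter, mem_image, mem_univ, true_and,
      SimpleGraph.mem_neighborFinset, not_or, not_exists, not_and]
    exact ⟨fun v ⟨hav, hv⟩ p hp => hS v hv hav.symm ⟨p, hp⟩,
      fun v hav hv => hroots v a (G.ne_of_adj hav).symm hv⟩
  obtain ⟨ea, hea⟩ := SubtreeEmb.exists_labels_avoiding (t a) hinj L hroot hL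
  refine ⟨ea, fun v hv hav => Set.disjoint_left.2 ?_, fun v hav => ?_⟩
  · rintro _ ⟨p, rfl⟩ ⟨q, hq⟩
    refine hea p (mem_union_left _ (mem_biUnion.2 ⟨v, ?_, mem_image.2 ⟨q, mem_univ _, hq⟩⟩))
    exact mem_inter.2 ⟨(G.mem_neighborFinset a v).2 hav, hv⟩
  · rintro ⟨p, hp⟩
    exact hea p (mem_union_right _ (mem_image.2 ⟨v, (G.mem_neighborFinset a v).2 hav, hp.symm⟩))

theorem SubtreeEmb.exists_untangled_on (hdeg : ∀ u : U, (G.neighborSet u).ncard ≤ Δ)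
    (hinj : ∀ u, Function.Injective (t u))
    (hroots : ∀ u v : U, u ≠ v → t u (TreePos.root D h) ≠ t v (TreePos.root D h))
    (hD : Δ * (Fintype.card (TreePos d h) + 1) + d ≤ D) (S : Finset U) :
    ∃ e : U → SubtreeEmb d D h,
      (∀ u ∈ S, ∀ v ∈ S, G.Adj u v →
        Disjoint (Set.range (t u ∘ (e u).toFun)) (Set.range (t v ∘ (e v).toFun))) ∧
      ∀ u ∈ S, ∀ v, G.Adj u v →
        t v (TreePos.root D h) ∉ Set.range (t u ∘ (e u).toFun) := by
  classical
  induction S using Finset.induction_on with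
  | empty =>
    obtain ⟨e₀, -⟩ := SubtreeEmb.exists_avoiding (d := d) (D := D) (h := h) ∅
      (notMem_empty _) (by rw [card_empty]; omega)
    exact ⟨fun _ => e₀, by simp, by simp⟩
  | insert a S ha ih =>
    obtain ⟨e, hdisj, hroot⟩ := ih
    obtain ⟨ea, hdisj_a, hroot_a⟩ := SubtreeEmb.exists_avoiding_neighbors G t a (hdeg a)
      (hinj a) hroots hD e S fun v hv hva => hroot v hv a hva
    have hupdate : ∀ v ∈ S, Function.update e a ea v = e v := fun v hv =>
      Function.update_of_ne (ne_of_mem_of_not_mem hv ha) _ _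
    refine ⟨Function.update e a ea, ?_, ?_⟩
    · intro u hu v hv huv
      rcases mem_insert.1 hu with rfl | huS <;> rcases mem_insert.1 hv with rfl | hvS
      · exact (G.irrefl huv).elim
      · simpa [hupdate v hvS] using hdisj_a v hvS huv
      · simpa [hupdate u huS] using (hdisj_a u huS huv.symm).symm
      · simpa [hupdate u huS, hupdate v hvS] using hdisj u huS v hvS huv
    · intro u hu v huv
      rcases mem_insert.1 hu with rfl | huS
      · simpa using hroot_a v huv
      · simpa [hupdate u huS] using hroot u huS v huv

end Untangling

/-- For all d, h, Δ there is a D₀ so that for all D ≥ D₀ the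
following holds.  If G is a graph with maximum degree at most Δ and each
vertex u of G carries a D-ary ordered tree T(u) of height h (labelled
injectively in a common ground set, all roots distinct), then one can choose
d-ary subtrees T'(u) ⊆ T(u) of height h such that for every edge uv of G the
subtrees T'(u) and T'(v) are vertex-disjoint. -/
theorem stmt7 (d h Δ : ℕ) :
    ∃ D₀ : ℕ, ∀ D : ℕ, D₀ ≤ D →
      ∀ (U W : Type) [Fintype U] (G : SimpleGraph U),
        (∀ u : U, (G.neighborSet u).ncard ≤ Δ) →
        ∀ t : U → TreePos D h → W,
          (∀ u, Function.Injective (t u)) →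
          (∀ u v : U, u ≠ v → t u (TreePos.root D h) ≠ t v (TreePos.root D h)) →
          ∃ e : U → SubtreeEmb d D h,
            ∀ u v : U, G.Adj u v →
              Disjoint (Set.range (t u ∘ (e u).toFun))
                (Set.range (t v ∘ (e v).toFun)) := by
  refine ⟨Δ * (Fintype.card (TreePos d h) + 1) + d, fun D hD U W _ G hdeg t hinj hroots => ?_⟩
  obtain ⟨e, he, -⟩ := SubtreeEmb.exists_untangled_on G t hdeg hinj hroots hD univ
  exact ⟨e, fun u v huv => he u (mem_univ u) v (mem_univ v) huv⟩
end

section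
/- Every connected r-uniform tree T on n vertices with maximum degree at most d admits a (graph) tree S on n+1 vertices with maximum degree at most d·r such that every edge of T is a set of r vertices of S that pairwise have distance at most d+1 in S; in other words, T is a subhypergraph of K_r(S^{d+1}). -/
/-!
Add a root `none` and attach every vertex `v` to the *anchor* of `e (f v)`, where `f v` is the
first edge containing `v`: among the vertices of `e (f v)` already covered by earlier edges, one
whose own first edge is latest (the root if there is none, which connectedness allows only for
`f v = 0`). Parents have strictly earlier first edges, so the parent pointers form a tree. A vertex
`v` anchors only edges through `v` other than `e (f v)`, each giving at most `r - 1` children, so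
its degree is at most `1 + (d - 1)(r - 1) ≤ d r`; the children of the root all lie in `e 0`.

For `u, w` in a common edge with `f w ≤ f u`, nestedness gives `w ∈ e (f u)`. Stepping from `u`
to the anchor `a` of `e (f u)` preserves this (`w ∈ e (f a)`, by maximality of the anchor) and
drops an edge through `w` from those up to the current one, until `u` and `w` are siblings.
Hence `dist u w ≤ d + 1`.
-/

open Finset

namespace SimpleGraph

variable {V : Type*}

def parentGraph (p : V → Option V) : SimpleGraph (Option V) :=
  fromRel fun x y => ∃ v, x = some v ∧ y = p v

section ParentGraph

variable {p : V → Option V}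

lemma parentGraph_adj {x y : Option V} :
    (parentGraph p).Adj x y ↔
      x ≠ y ∧ ((∃ v, x = some v ∧ y = p v) ∨ ∃ v, y = some v ∧ x = p v) :=
  fromRel_adj ..

lemma neighborSet_parentGraph_none :
    (parentGraph p).neighborSet none = some '' {u | p u = none} := by
  ext y
  simp only [mem_neighborSet, parentGraph_adj, Set.mem_image, Set.mem_ofPred_eq]
  constructor
  · rintro ⟨-, ⟨v, hv, -⟩ | ⟨u, rfl, hu⟩⟩
    · exact absurd hv (Option.some_ne_none v).symm
    · exact ⟨u, hu.symm, rfl⟩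
  · rintro ⟨u, hu, rfl⟩
    exact ⟨(Option.some_ne_none u).symm, .inr ⟨u, rfl, hu.symm⟩⟩

lemma neighborSet_parentGraph_some_subset (v : V) :
    (parentGraph p).neighborSet (some v) ⊆ insert (p v) (some '' {u | p u = some v}) := by
  rintro y ⟨-, ⟨w, hw, rfl⟩ | ⟨u, rfl, hu⟩⟩
  · exact .inl (by rw [Option.some_injective _ hw])
  · exact .inr ⟨u, hu.symm, rfl⟩

lemma ncard_neighborSet_parentGraph_none :
    ((parentGraph p).neighborSet none).ncard = {u | p u = none}.ncard := by
  rw [neighborSet_parentGraph_none, Set.ncard_image_of_injective _ (Option.some_injective V)]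

lemma ncard_neighborSet_parentGraph_some_le [Finite V] (v : V) :
    ((parentGraph p).neighborSet (some v)).ncard ≤ {u | p u = some v}.ncard + 1 :=
  (Set.ncard_le_ncard (neighborSet_parentGraph_some_subset v) (Set.toFinite _)).trans <|
    (Set.ncard_insert_le _ _).trans_eq
      (by rw [Set.ncard_image_of_injective _ (Option.some_injective V)])

variable {α : Type*} [Preorder α] {ρ : V → α}

lemma parentGraph_adj_parent (hρ : ∀ v u, p v = some u → ρ u < ρ v) (v : V) :
    (parentGraph p).Adj (some v) (p v) :=
  parentGraph_adj.2 ⟨fun h => (hρ v v h.symm).false, .inl ⟨v, rfl, rfl⟩⟩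

lemma dist_parentGraph_le_two_of_parent_eq (hρ : ∀ v u, p v = some u → ρ u < ρ v) {u w : V}
    (h : p u = p w) : (parentGraph p).dist (some u) (some w) ≤ 2 := by
  have hu := parentGraph_adj_parent hρ u
  have hw := parentGraph_adj_parent hρ w
  rw [h] at hu
  calc (parentGraph p).dist (some u) (some w)
      ≤ (parentGraph p).dist (some u) (p w) + (parentGraph p).dist (p w) (some w) :=
        hw.reachable.symm.dist_triangle_right _
    _ = 2 := by rw [dist_eq_one_iff_adj.2 hu, dist_eq_one_iff_adj.2 hw.symm]

lemma card_edgeSet_parentGraph (hρ : ∀ v u, p v = some u → ρ u < ρ v) :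
    Nat.card (parentGraph p).edgeSet = Nat.card V := by
  refine (Nat.card_eq_of_bijective
    (fun v => ⟨s(some v, p v), parentGraph_adj_parent hρ v⟩) ⟨fun v w h => ?_, ?_⟩).symm
  · have h := congrArg Subtype.val h
    simp only [Sym2.eq_iff, Option.some.injEq] at h
    rcases h with ⟨h, -⟩ | ⟨hv, hw⟩
    · exact h
    · exact absurd (hρ w v hv.symm) (hρ v w hw).asymm
  · rintro ⟨e, he⟩
    induction e using Sym2.ind with
    | _ x y =>
    obtain ⟨-, ⟨v, rfl, rfl⟩ | ⟨v, rfl, rfl⟩⟩ := parentGraph_adj.1 he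
    · exact ⟨v, rfl⟩
    · exact ⟨v, Subtype.ext Sym2.eq_swap⟩

variable [WellFoundedLT α]

lemma parentGraph_reachable_none (hρ : ∀ v u, p v = some u → ρ u < ρ v) (v : V) :
    (parentGraph p).Reachable (some v) none := by
  induction h : ρ v using WellFoundedLT.induction generalizing v with
  | _ n ih =>
    have hv := (parentGraph_adj_parent hρ v).reachable
    cases hp : p v with
    | none => rwa [hp] at hv
    | some u => rw [hp] at hv; exact hv.trans (ih _ (h ▸ hρ v u hp) u rfl)

lemma parentGraph_connected (hρ : ∀ v u, p v = some u → ρ u < ρ v) :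
    (parentGraph p).Connected :=
  (connected_iff_exists_forall_reachable _).2 ⟨none, fun
    | none => .rfl
    | some v => (parentGraph_reachable_none hρ v).symm⟩

theorem isTree_parentGraph [Finite V] (hρ : ∀ v u, p v = some u → ρ u < ρ v) :
    (parentGraph p).IsTree :=
  isTree_iff_connected_and_card.2
    ⟨parentGraph_connected hρ, by rw [card_edgeSet_parentGraph hρ, Finite.card_option]⟩

end ParentGraph

end SimpleGraph

namespace Hypertree

open SimpleGraph

noncomputable section

variable {V : Type*} {m : ℕ}

lemma pos_of_forall_card_eq {e : Fin m → Finset V} {r : ℕ} (huniform : ∀ i, #(e i) = r)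
    {v : V} {i : Fin m} (hv : v ∈ e i) : 0 < r :=
  huniform i ▸ card_pos.2 ⟨v, hv⟩

variable [DecidableEq V] (e : Fin m → Finset V)

def earlierUnion (i : Fin m) : Finset V :=
  (Finset.univ.filter (fun j => j < i)).biUnion e

variable (hcover : ∀ v : V, ∃ i, v ∈ e i)

def firstEdge (v : V) : Fin m :=
  (univ.filter (v ∈ e ·)).min' <| let ⟨i, hi⟩ := hcover v; ⟨i, by simpa using hi⟩

def anchor (i : Fin m) : Option V :=
  if h : (e i ∩ earlierUnion e i).Nonempty then
    some ((e i ∩ earlierUnion e i).exists_max_image (firstEdge e hcover) h).choose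
  else none

def parent (v : V) : Option V :=
  anchor e hcover (firstEdge e hcover v)

variable {e hcover}

lemma pos_of_forall_card_filter_mem_le {d : ℕ} (hdeg : ∀ v : V, #{i | v ∈ e i} ≤ d) {v : V}
    {i : Fin m} (hv : v ∈ e i) : 0 < d :=
  (card_pos.2 ⟨i, by simpa using hv⟩).trans_le (hdeg v)

lemma mem_firstEdge (v : V) : v ∈ e (firstEdge e hcover v) :=
  (mem_filter.1 (min'_mem (univ.filter (v ∈ e ·)) _)).2

lemma firstEdge_le {v : V} {i : Fin m} (h : v ∈ e i) : firstEdge e hcover v ≤ i :=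
  min'_le _ _ (by simpa using h)

lemma mem_earlierUnion_iff (hcover : ∀ v : V, ∃ i, v ∈ e i) {v : V} {i : Fin m} :
    v ∈ earlierUnion e i ↔ firstEdge e hcover v < i := by
  simp only [earlierUnion, mem_biUnion, mem_filter, mem_univ, true_and]
  exact ⟨fun ⟨_, hj, hv⟩ => (firstEdge_le hv).trans_lt hj, fun h => ⟨_, h, mem_firstEdge v⟩⟩

lemma exists_anchor_eq_some {i : Fin m} (h : (e i ∩ earlierUnion e i).Nonempty) :
    ∃ a, anchor e hcover i = some a :=
  ⟨_, dif_pos h⟩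

lemma anchor_spec {i : Fin m} {a : V} (h : anchor e hcover i = some a) :
    a ∈ e i ∧ firstEdge e hcover a < i ∧
      ∀ y ∈ e i, firstEdge e hcover y < i → firstEdge e hcover y ≤ firstEdge e hcover a := by
  unfold anchor at h
  split_ifs at h with hne
  obtain ⟨ha, hmax⟩ :=
    ((e i ∩ earlierUnion e i).exists_max_image (firstEdge e hcover) hne).choose_spec
  obtain rfl := Option.some_injective _ h
  rw [mem_inter, mem_earlierUnion_iff hcover] at ha
  exact ⟨ha.1, ha.2, fun y hy hlt =>
    hmax y (mem_inter.2 ⟨hy, (mem_earlierUnion_iff hcover).2 hlt⟩)⟩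

lemma firstEdge_lt_of_parent_eq_some {v a : V} (h : parent e hcover v = some a) :
    firstEdge e hcover a < firstEdge e hcover v :=
  (anchor_spec h).2.1

lemma isTree_parentGraph_parent [Finite V] : (parentGraph (parent e hcover)).IsTree :=
  isTree_parentGraph fun _ _ => firstEdge_lt_of_parent_eq_some

lemma mem_firstEdge_of_firstEdge_le
    (hnest : ∀ i : Fin m, 0 < (i : ℕ) → ∃ i₀, i₀ < i ∧ e i ∩ earlierUnion e i ⊆ e i₀)
    {i : Fin m} {x w : V} (hx : x ∈ e i) (hw : w ∈ e i)
    (hle : firstEdge e hcover w ≤ firstEdge e hcover x) : w ∈ e (firstEdge e hcover x) := by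
  induction i using WellFoundedLT.induction with
  | _ i ih =>
  rcases (firstEdge_le hx).lt_or_eq with hlt | heq
  · obtain ⟨i₀, hi₀, hsub⟩ := hnest i (Nat.zero_le _ |>.trans_lt hlt)
    exact ih i₀ hi₀ (hsub (mem_inter.2 ⟨hx, (mem_earlierUnion_iff hcover).2 hlt⟩))
      (hsub (mem_inter.2 ⟨hw, (mem_earlierUnion_iff hcover).2 (hle.trans_lt hlt)⟩))
  · rwa [heq]

lemma dist_le_card_edges_through
    (hnest : ∀ i : Fin m, 0 < (i : ℕ) → ∃ i₀, i₀ < i ∧ e i ∩ earlierUnion e i ⊆ e i₀)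
    {u w : V} (hw : w ∈ e (firstEdge e hcover u)) :
    (parentGraph (parent e hcover)).dist (some u) (some w) ≤
      #{k | k ≤ firstEdge e hcover u ∧ w ∈ e k} + 1 := by
  have hρ : ∀ v a, parent e hcover v = some a → firstEdge e hcover a < firstEdge e hcover v :=
    fun _ _ => firstEdge_lt_of_parent_eq_some
  induction hu : firstEdge e hcover u using WellFoundedLT.induction generalizing u with
  | _ j ih =>
  subst hu
  have hw_count : 1 ≤ #{k | k ≤ firstEdge e hcover u ∧ w ∈ e k} :=
    card_pos.2 ⟨firstEdge e hcover u, by simp [hw]⟩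
  rcases (firstEdge_le hw).lt_or_eq with hlt | heq
  · obtain ⟨a, ha⟩ :=
      exists_anchor_eq_some ⟨w, mem_inter.2 ⟨hw, (mem_earlierUnion_iff hcover).2 hlt⟩⟩
    obtain ⟨ha_mem, ha_lt, ha_max⟩ := anchor_spec ha
    have hwa : w ∈ e (firstEdge e hcover a) :=
      mem_firstEdge_of_firstEdge_le hnest ha_mem hw (ha_max w hw hlt)
    have hadj : (parentGraph (parent e hcover)).Adj (some u) (some a) :=
      ha ▸ parentGraph_adj_parent hρ u
    have hcount : #{k | k ≤ firstEdge e hcover a ∧ w ∈ e k} <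
        #{k | k ≤ firstEdge e hcover u ∧ w ∈ e k} := by
      refine card_lt_card <| (ssubset_iff_of_subset fun k hk => ?_).2
        ⟨firstEdge e hcover u, by simp [hw], by simp [ha_lt]⟩
      simp only [mem_filter, mem_univ, true_and] at hk ⊢
      exact ⟨hk.1.trans ha_lt.le, hk.2⟩
    have htri := hadj.reachable.dist_triangle_left (some w)
    rw [dist_eq_one_iff_adj.2 hadj] at htri
    have := ih _ ha_lt hwa rfl
    omega
  · have := dist_parentGraph_le_two_of_parent_eq hρ
      (show parent e hcover u = parent e hcover w by rw [parent, parent, heq])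
    omega

lemma ncard_parent_eq_some_le {r d : ℕ} (huniform : ∀ i, #(e i) = r)
    (hdeg : ∀ v : V, #{i | v ∈ e i} ≤ d) (v : V) :
    {u | parent e hcover u = some v}.ncard ≤ (d - 1) * (r - 1) := by
  set J := ({i | v ∈ e i} : Finset (Fin m)).erase (firstEdge e hcover v)
  have hsub : {u | parent e hcover u = some v} ⊆ J.biUnion fun j => e j \ earlierUnion e j := by
    intro u hu
    obtain ⟨hv, hlt, -⟩ := anchor_spec hu
    refine mem_biUnion.2 ⟨firstEdge e hcover u, mem_erase.2 ⟨hlt.ne', by simpa using hv⟩, ?_⟩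
    exact mem_sdiff.2 ⟨mem_firstEdge u, fun h => ((mem_earlierUnion_iff hcover).1 h).false⟩
  have hJ : #J ≤ d - 1 := by
    rw [card_erase_of_mem (by simpa using mem_firstEdge v)]
    exact Nat.sub_le_sub_right (hdeg v) 1
  have hnew : ∀ j ∈ J, #(e j \ earlierUnion e j) ≤ r - 1 := by
    intro j hj
    obtain ⟨hne, hvj⟩ := mem_erase.1 hj
    rw [mem_filter] at hvj
    have hv : v ∈ earlierUnion e j ∩ e j := mem_inter.2
      ⟨(mem_earlierUnion_iff hcover).2 ((firstEdge_le hvj.2).lt_of_ne hne.symm), hvj.2⟩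
    rw [card_sdiff, huniform]
    exact Nat.sub_le_sub_left (card_pos.2 ⟨v, hv⟩) r
  calc {u | parent e hcover u = some v}.ncard
      ≤ #(J.biUnion fun j => e j \ earlierUnion e j) := by
        rw [← Set.ncard_coe_finset]
        exact Set.ncard_le_ncard hsub
    _ ≤ #J * (r - 1) := card_biUnion_le_card_mul _ _ _ hnew
    _ ≤ (d - 1) * (r - 1) := Nat.mul_le_mul_right _ hJ

lemma firstEdge_eq_zero_of_parent_eq_none
    (hconn : ∀ i : Fin m, 0 < (i : ℕ) → (e i ∩ earlierUnion e i).Nonempty) {u : V}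
    (h : parent e hcover u = none) : (firstEdge e hcover u : ℕ) = 0 := by
  by_contra h0
  obtain ⟨a, ha⟩ := exists_anchor_eq_some (hcover := hcover) (hconn _ (Nat.pos_of_ne_zero h0))
  exact Option.some_ne_none a (ha.symm.trans h)

lemma ncard_parent_eq_none_le {r : ℕ}
    (hconn : ∀ i : Fin m, 0 < (i : ℕ) → (e i ∩ earlierUnion e i).Nonempty)
    (huniform : ∀ i, #(e i) = r) : {u | parent e hcover u = none}.ncard ≤ r := by
  rcases Set.eq_empty_or_nonempty {u | parent e hcover u = none} with h | ⟨u₀, hu₀⟩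
  · simp [h]
  calc {u | parent e hcover u = none}.ncard ≤ #(e (firstEdge e hcover u₀)) := by
        rw [← Set.ncard_coe_finset]
        refine Set.ncard_le_ncard fun u hu => ?_
        have : firstEdge e hcover u = firstEdge e hcover u₀ := Fin.ext <|
          (firstEdge_eq_zero_of_parent_eq_none hconn hu).trans
            (firstEdge_eq_zero_of_parent_eq_none hconn hu₀).symm
        exact this ▸ mem_firstEdge u
    _ = r := huniform _

lemma ncard_neighborSet_parentGraph_parent_le [Finite V] {r d : ℕ}
    (hconn : ∀ i : Fin m, 0 < (i : ℕ) → (e i ∩ earlierUnion e i).Nonempty)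
    (huniform : ∀ i, #(e i) = r) (hdeg : ∀ v : V, #{i | v ∈ e i} ≤ d) (x : Option V) :
    ((parentGraph (parent e hcover)).neighborSet x).ncard ≤ d * r := by
  cases x with
  | none =>
    rw [ncard_neighborSet_parentGraph_none]
    rcases Set.eq_empty_or_nonempty {u | parent e hcover u = none} with h | ⟨u₀, -⟩
    · simp [h]
    exact (ncard_parent_eq_none_le hconn huniform).trans
      (Nat.le_mul_of_pos_left r
        (pos_of_forall_card_filter_mem_le hdeg (hcover u₀).choose_spec))
  | some v =>
    obtain ⟨i, hv⟩ := hcover v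
    obtain ⟨d, rfl⟩ := Nat.exists_eq_add_one.2 (pos_of_forall_card_filter_mem_le hdeg hv)
    obtain ⟨r, rfl⟩ := Nat.exists_eq_add_one.2 (pos_of_forall_card_eq huniform hv)
    calc ((parentGraph (parent e hcover)).neighborSet (some v)).ncard
        ≤ {u | parent e hcover u = some v}.ncard + 1 := ncard_neighborSet_parentGraph_some_le v
      _ ≤ d * r + 1 := by simpa using ncard_parent_eq_some_le huniform hdeg v
      _ ≤ (d + 1) * (r + 1) := by ring_nf; omega

end

end Hypertree

open Finset SimpleGraph Hypertree

theorem stmt8_general {V : Type*} [Fintype V] [DecidableEq V] (r d m : ℕ)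
    (e : Fin m → Finset V)
    (huniform : ∀ i, (e i).card = r)
    (hcover : ∀ v : V, ∃ i, v ∈ e i)
    (htree : ∀ i : Fin m, 0 < (i : ℕ) →
      (e i ∩ (Finset.univ.filter (fun j => j < i)).biUnion e).card ≤ r - 1 ∧
      ∃ i₀, i₀ < i ∧ e i ∩ (Finset.univ.filter (fun j => j < i)).biUnion e ⊆ e i₀)
    (hconn : ∀ i : Fin m, 0 < (i : ℕ) →
      (e i ∩ (Finset.univ.filter (fun j => j < i)).biUnion e).Nonempty)
    (hdeg : ∀ v : V, (Finset.univ.filter (fun i => v ∈ e i)).card ≤ d) :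
    ∃ S : SimpleGraph (Option V), S.IsTree ∧
      (∀ v, (S.neighborSet v).ncard ≤ d * r) ∧
      ∀ i : Fin m, ∀ u ∈ e i, ∀ w ∈ e i, S.dist (some u) (some w) ≤ d + 1 := by
  refine ⟨parentGraph (parent e hcover), isTree_parentGraph_parent,
    ncard_neighborSet_parentGraph_parent_le hconn huniform hdeg, fun i u hu w hw => ?_⟩
  wlog hle : firstEdge e hcover w ≤ firstEdge e hcover u generalizing u w
  · rw [dist_comm]
    exact this w hw u hu (le_of_not_ge hle)
  have hnest := fun i hi => (htree i hi).2
  calc (parentGraph (parent e hcover)).dist (some u) (some w)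
      ≤ #{k | k ≤ firstEdge e hcover u ∧ w ∈ e k} + 1 :=
        dist_le_card_edges_through hnest (mem_firstEdge_of_firstEdge_le hnest hu hw hle)
    _ ≤ d + 1 := by
        gcongr
        refine (card_le_card fun k hk => ?_).trans (hdeg w)
        simp only [mem_filter, mem_univ, true_and] at hk ⊢
        exact hk.2

/-- Every connected r-uniform tree T on a vertex set V with
maximum degree at most d admits a (graph) tree S on V ∪ {x} (that is, on
n + 1 vertices) with maximum degree at most d·r such that every edge of T is
an r-set of vertices of S of pairwise distance at most d+1 in S, i.e.
T ⊆ K_r(S^{d+1}).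

The r-uniform tree is given by its ordered edge list e 0, …, e (m-1), each an
r-set, where each edge beyond the first meets the union of the previous edges
in a nonempty set of at most r-1 vertices contained in a single previous
edge. -/
theorem stmt8 {V : Type*} [Fintype V] [DecidableEq V] (r d m : ℕ) (hr : 1 ≤ r)
    (e : Fin m → Finset V)
    (huniform : ∀ i, (e i).card = r)
    (hcover : ∀ v : V, ∃ i, v ∈ e i)
    (htree : ∀ i : Fin m, 0 < (i : ℕ) →
      (e i ∩ (Finset.univ.filter (fun j => j < i)).biUnion e).card ≤ r - 1 ∧
      ∃ i₀, i₀ < i ∧ e i ∩ (Finset.univ.filter (fun j => j < i)).biUnion e ⊆ e i₀)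
    (hconn : ∀ i : Fin m, 0 < (i : ℕ) →
      (e i ∩ (Finset.univ.filter (fun j => j < i)).biUnion e).Nonempty)
    (hdeg : ∀ v : V, (Finset.univ.filter (fun i => v ∈ e i)).card ≤ d) :
    ∃ S : SimpleGraph (Option V), S.IsTree ∧
      (∀ v, (S.neighborSet v).ncard ≤ d * r) ∧
      ∀ i : Fin m, ∀ u ∈ e i, ∀ w ∈ e i, S.dist (some u) (some w) ≤ d + 1 :=
  stmt8_general r d m e huniform hcover htree hconn hdeg
end

section
/- In the construction of the tree S from a connected r-uniform tree T with edges e₁,…,e_m (where S₁ is a star with root x and leaves e₁, and S_i is formed from S_{i−1} by attaching the vertices of e_i \ e_{f(i)} as leaves to a chosen vertex p_i ∈ e_i ∩ e_{f(i)}), the degree of every vertex u of T in S_i satisfies deg_{S_i}(u) ≤ r · deg_{T_i}(u), where T_i is the subhypergraph of T spanned by e₁,…,e_i and deg_{T_i}(u) is the number of edges among e₁,…,e_i containing u. -/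
/-!
Going from `S (i - 1)` to `S i` joins the centre `p i` to the new leaves `e i \ e (f i)`, all of
which lie in `e i`. The centre is not itself a new leaf (it lies in `e (f i)`), so it gains at
most `|e i| = r` neighbours, while each new leaf gains just one. Hence the degree of `u` grows by
at most `r` at a step `i` with `u ∈ e i` and not at all otherwise; the star `S 0` is the same
picture with centre `none` attached to the empty graph.
-/

open Set

namespace SimpleGraph

variable {α : Type*} {G H : SimpleGraph α} {c : α} {L : Set α}

theorem neighborSet_eq_union_of_adj_iff
    (hH : ∀ a b, H.Adj a b ↔ G.Adj a b ∨ (a = c ∧ b ∈ L) ∨ (b = c ∧ a ∈ L)) (u : α) :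
    H.neighborSet u = G.neighborSet u ∪ {b | (u = c ∧ b ∈ L) ∨ (b = c ∧ u ∈ L)} := by
  ext b
  exact hH u b

open scoped Classical in
theorem encard_neighborSet_le_of_adj_iff
    (hH : ∀ a b, H.Adj a b ↔ G.Adj a b ∨ (a = c ∧ b ∈ L) ∨ (b = c ∧ a ∈ L))
    (hc : c ∉ L) {k : ℕ∞} (hL : L.encard ≤ k) (u : α) :
    (H.neighborSet u).encard ≤ (G.neighborSet u).encard + if u = c ∨ u ∈ L then k else 0 := by
  rw [neighborSet_eq_union_of_adj_iff hH]
  refine (encard_union_le _ _).trans (add_le_add le_rfl ?_)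
  split_ifs with hu
  · rcases hu with rfl | hu
    · refine (encard_le_encard fun b hb => ?_).trans hL
      rcases hb with ⟨-, hb⟩ | ⟨-, hu⟩
      exacts [hb, (hc hu).elim]
    · have hcu : u ≠ c := fun h => hc (h ▸ hu)
      calc {b | (u = c ∧ b ∈ L) ∨ (b = c ∧ u ∈ L)}.encard
          ≤ ({c} : Set α).encard := encard_le_encard fun b hb => by simpa [hcu, hu] using hb
        _ = 1 := encard_singleton c
        _ ≤ L.encard := one_le_encard_iff_nonempty.2 ⟨u, hu⟩
        _ ≤ k := hL
  · simp [not_or.1 hu]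

theorem encard_neighborSet_some_le_of_adj_iff {V : Type*} [DecidableEq V]
    {G H : SimpleGraph (Option V)} {c : Option V} {s t : Finset V} {k : ℕ}
    (hH : ∀ a b, H.Adj a b ↔ G.Adj a b ∨
      (a = c ∧ ∃ v ∈ s, b = some v) ∨ (b = c ∧ ∃ v ∈ s, a = some v))
    (hcs : ∀ v ∈ s, some v ≠ c) (hct : ∀ w, c = some w → w ∈ t) (hst : s ⊆ t)
    (hs : s.card ≤ k) (u : V) :
    (H.neighborSet (some u)).encard ≤
      (G.neighborSet (some u)).encard + if u ∈ t then (k : ℕ∞) else 0 := by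
  have hH' : ∀ a b, H.Adj a b ↔ G.Adj a b ∨
      (a = c ∧ b ∈ some '' (s : Set V)) ∨ (b = c ∧ a ∈ some '' (s : Set V)) := by
    simpa only [mem_image, Finset.mem_coe, eq_comm (b := some _)] using hH
  have hL : (some '' (s : Set V)).encard ≤ k := by
    rw [Option.some_injective V |>.encard_image, encard_coe_eq_coe_finsetCard]
    exact_mod_cast hs
  refine (encard_neighborSet_le_of_adj_iff hH' (by simpa using hcs) hL _).trans
    (add_le_add le_rfl ?_)
  split_ifs with hu hut hut
  · exact le_rfl
  · rcases hu with hu | ⟨v, hv, hvu⟩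
    · exact (hut (hct u hu.symm)).elim
    · exact (hut (Option.some_injective V hvu ▸ hst hv)).elim
  all_goals exact zero_le

end SimpleGraph

theorem stmt10_general {V : Type*} [DecidableEq V] (r m : ℕ)
    (e : ℕ → Finset V) (f : ℕ → ℕ) (p : ℕ → V)
    (S : ℕ → SimpleGraph (Option V))
    (huniform : ∀ i < m, (e i).card = r)
    (hp : ∀ i, 1 ≤ i → i < m →
      p i ∈ e i ∩ e (f i) ∧ (1 ≤ f i → p i ∉ e (f (f i))))
    (hS0 : ∀ a b : Option V, (S 0).Adj a b ↔
      ((a = none ∧ ∃ v ∈ e 0, b = some v) ∨ (b = none ∧ ∃ v ∈ e 0, a = some v)))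
    (hSsucc : ∀ i, 1 ≤ i → i < m → ∀ a b : Option V, (S i).Adj a b ↔
      ((S (i - 1)).Adj a b ∨
        (a = some (p i) ∧ ∃ v ∈ e i \ e (f i), b = some v) ∨
        (b = some (p i) ∧ ∃ v ∈ e i \ e (f i), a = some v))) :
    ∀ i < m, ∀ u : V,
      ((S i).neighborSet (some u)).ncard ≤
        r * ((Finset.range (i + 1)).filter (fun j => u ∈ e j)).card := by
  have hdeg : ∀ i < m, ∀ u, ((S i).neighborSet (some u)).encard ≤
      ∑ j ∈ Finset.range (i + 1), if u ∈ e j then (r : ℕ∞) else 0 := by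
    intro i
    induction i with
    | zero =>
      intro hm u
      have h := SimpleGraph.encard_neighborSet_some_le_of_adj_iff (G := ⊥) (c := none) (t := e 0)
        (by simpa using hS0) (by simp) (by simp) subset_rfl (huniform 0 hm).le u
      simpa using h
    | succ i ih =>
      intro hi u
      obtain ⟨hpe, hpf⟩ := Finset.mem_inter.1 (hp (i + 1) (by omega) hi).1
      have h := SimpleGraph.encard_neighborSet_some_le_of_adj_iff (t := e (i + 1))
        (by simpa using hSsucc (i + 1) (by omega) hi)
        (fun v hv hvp => (Finset.mem_sdiff.1 hv).2 (by rwa [Option.some_injective _ hvp]))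
        (by simpa using hpe) Finset.sdiff_subset
        ((Finset.card_le_card Finset.sdiff_subset).trans (huniform _ hi).le) u
      rw [Finset.sum_range_succ]
      exact h.trans (add_le_add (ih (by omega) u) le_rfl)
  intro i hi u
  rw [ncard_def]
  refine ENat.toNat_le_of_le_natCast ((hdeg i hi u).trans_eq ?_)
  rw [← Finset.sum_filter, Finset.sum_const, nsmul_eq_mul]
  push_cast
  ring

/-- In the iterative construction of the tree S from a connected
r-uniform tree T with edges e 0, …, e (m-1) (S 0 is a star with root `none`
and leaves e 0; S i is S (i-1) with the vertices of e i \ e (f i) attached as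
leaves to p i ∈ e i ∩ e (f i)), the degree of every vertex u of T in S i is at
most r times the number of edges among e 0, …, e i containing u. -/
theorem stmt10 {V : Type*} [Fintype V] [DecidableEq V] (r m : ℕ) (hm : 1 ≤ m)
    (e : ℕ → Finset V) (f : ℕ → ℕ) (p : ℕ → V)
    (S : ℕ → SimpleGraph (Option V))
    (huniform : ∀ i < m, (e i).card = r)
    (hf : ∀ i, 1 ≤ i → i < m → f i < i ∧
      e i ∩ (Finset.range i).biUnion e ⊆ e (f i) ∧
      1 ≤ (e i ∩ (Finset.range i).biUnion e).card ∧
      (e i ∩ (Finset.range i).biUnion e).card ≤ r - 1)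
    (hp : ∀ i, 1 ≤ i → i < m →
      p i ∈ e i ∩ e (f i) ∧ (1 ≤ f i → p i ∉ e (f (f i))))
    (hS0 : ∀ a b : Option V, (S 0).Adj a b ↔
      ((a = none ∧ ∃ v ∈ e 0, b = some v) ∨ (b = none ∧ ∃ v ∈ e 0, a = some v)))
    (hSsucc : ∀ i, 1 ≤ i → i < m → ∀ a b : Option V, (S i).Adj a b ↔
      ((S (i - 1)).Adj a b ∨
        (a = some (p i) ∧ ∃ v ∈ e i \ e (f i), b = some v) ∨
        (b = some (p i) ∧ ∃ v ∈ e i \ e (f i), a = some v))) :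
    ∀ i < m, ∀ u : V,
      ((S i).neighborSet (some u)).ncard ≤
        r * ((Finset.range (i + 1)).filter (fun j => u ∈ e j)).card :=
  stmt10_general r m e f p S huniform hp hS0 hSsucc
end

section
/- With the same construction of S from a connected r-uniform tree T (edges e₁,…,e_m, function f, attachment vertices p_i ∈ e_i ∩ e_{f(i)}): for every i ≥ 2, every u ∈ e_i \ e_{f(i)}, and every w ∈ e_i, the distance in S between u and w is at most deg_{T_i}(w) + 1, where deg_{T_i}(w) is the number of edges among e₁,…,e_i containing w. -/
/-!
Follow the construction backwards. The vertex `u` is a leaf hanging at `p i`. If `w` is a leaf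
of the same step, `u, p i, w` is a path of length two. Otherwise `w`, like `p i`, lies in
`e (f i)`; for `f i = 0` both are children of the root, and for `f i ≥ 1` the vertex `p i`
is itself a new leaf of step `f i`, so by induction it is within `deg_{T_{f i}}(w) + 1` of `w`.
Since `w ∈ e i`, passing from `f i` to `i` raises the degree of `w` by at least one, which pays
for the extra edge from `u` to `p i`.
-/

open Finset SimpleGraph

lemma SimpleGraph.Adj.edist_le_edist_add_one {V : Type*} {G : SimpleGraph V} {u v : V}
    (h : G.Adj u v) (w : V) : G.edist u w ≤ G.edist v w + 1 :=
  calc G.edist u w ≤ G.edist u v + G.edist v w := G.edist_triangle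
    _ = G.edist v w + 1 := by rw [edist_eq_one_iff_adj.2 h, add_comm]

lemma SimpleGraph.reachable_and_dist_le_of_edist_le {V : Type*} {G : SimpleGraph V} {u v : V}
    {n : ℕ} (h : G.edist u v ≤ n) : G.Reachable u v ∧ G.dist u v ≤ n := by
  have hr : G.Reachable u v :=
    reachable_of_edist_ne_top (ne_top_of_le_ne_top (ENat.natCast_ne_top n) h)
  exact ⟨hr, by exact_mod_cast hr.coe_dist_eq_edist ▸ h⟩

section EdgeDegree

variable {V : Type*} (e : ℕ → Finset V) (i : ℕ) (w : V)

/-- The degree `deg_{T_i}(w)` of `w` in the hypergraph with edges `e 0, …, e i`. -/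
def edgeDegree [DecidableEq V] : ℕ := #((range (i + 1)).filter (w ∈ e ·))

variable {e i w} [DecidableEq V]

lemma edgeDegree_pos (hw : w ∈ e i) : 0 < edgeDegree e i w :=
  card_pos.2 ⟨i, mem_filter.2 ⟨self_mem_range_succ i, hw⟩⟩

lemma edgeDegree_lt_of_lt {j : ℕ} (hji : j < i) (hw : w ∈ e i) :
    edgeDegree e j w < edgeDegree e i w := by
  refine card_lt_card ((ssubset_iff_of_subset ?_).2 ⟨i, ?_, ?_⟩)
  · exact filter_subset_filter _ (range_subset_range.2 (by omega))
  · exact mem_filter.2 ⟨self_mem_range_succ i, hw⟩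
  · simp only [mem_filter, mem_range]
    omega

end EdgeDegree

lemma edist_le_edgeDegree_add_one {V : Type*} [DecidableEq V] {m : ℕ} {e : ℕ → Finset V}
    {f : ℕ → ℕ} {p : ℕ → V} {G : SimpleGraph (Option V)}
    (hf : ∀ i, 1 ≤ i → i < m → f i < i)
    (hp : ∀ i, 1 ≤ i → i < m → p i ∈ e (f i) ∧ (1 ≤ f i → p i ∉ e (f (f i))))
    (hroot : ∀ v ∈ e 0, G.Adj none (some v))
    (hleaf : ∀ i, 1 ≤ i → i < m → ∀ v ∈ e i \ e (f i), G.Adj (some (p i)) (some v)) :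
    ∀ i, 1 ≤ i → i < m → ∀ u ∈ e i \ e (f i), ∀ w ∈ e i,
      G.edist (some u) (some w) ≤ edgeDegree e i w + 1 := by
  intro i
  induction i using Nat.strong_induction_on with
  | _ i ih =>
    intro hi him u hu w hw
    have hpu := (hleaf i hi him u hu).symm.edist_le_edist_add_one (some w)
    by_cases hwf : w ∈ e (f i)
    · obtain ⟨hpf, hpff⟩ := hp i hi him
      have hfi := hf i hi him
      have hdeg := edgeDegree_lt_of_lt hfi hw
      rcases Nat.eq_zero_or_pos (f i) with hf0 | hf1
      · rw [hf0] at hwf hpf hdeg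
        have hpw := (hroot _ hpf).symm.edist_le_edist_add_one (some w)
        rw [edist_eq_one_iff_adj.2 (hroot w hwf)] at hpw
        calc G.edist (some u) (some w) ≤ 1 + 1 + 1 := hpu.trans (by gcongr)
          _ ≤ edgeDegree e i w + 1 := by
            gcongr
            have := edgeDegree_pos hwf
            exact_mod_cast (by omega : 2 ≤ edgeDegree e i w)
      · have hpw := ih (f i) hfi hf1 (hfi.trans him) (p i)
          (mem_sdiff.2 ⟨hpf, hpff hf1⟩) w hwf
        calc G.edist (some u) (some w) ≤ edgeDegree e (f i) w + 1 + 1 := hpu.trans (by gcongr)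
          _ ≤ edgeDegree e i w + 1 := by
            gcongr
            exact_mod_cast hdeg
    · rw [edist_eq_one_iff_adj.2 (hleaf i hi him w (mem_sdiff.2 ⟨hw, hwf⟩))] at hpu
      calc G.edist (some u) (some w) ≤ 1 + 1 := hpu
        _ ≤ edgeDegree e i w + 1 := by
          gcongr
          exact_mod_cast edgeDegree_pos hw

theorem stmt11_general {V : Type*} [DecidableEq V] (r m : ℕ)
    (e : ℕ → Finset V) (f : ℕ → ℕ) (p : ℕ → V)
    (S : ℕ → SimpleGraph (Option V))
    (hf : ∀ i, 1 ≤ i → i < m → f i < i ∧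
      e i ∩ (Finset.range i).biUnion e ⊆ e (f i) ∧
      1 ≤ (e i ∩ (Finset.range i).biUnion e).card ∧
      (e i ∩ (Finset.range i).biUnion e).card ≤ r - 1)
    (hp : ∀ i, 1 ≤ i → i < m →
      p i ∈ e i ∩ e (f i) ∧ (1 ≤ f i → p i ∉ e (f (f i))))
    (hS0 : ∀ a b : Option V, (S 0).Adj a b ↔
      ((a = none ∧ ∃ v ∈ e 0, b = some v) ∨ (b = none ∧ ∃ v ∈ e 0, a = some v)))
    (hSsucc : ∀ i, 1 ≤ i → i < m → ∀ a b : Option V, (S i).Adj a b ↔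
      ((S (i - 1)).Adj a b ∨
        (a = some (p i) ∧ ∃ v ∈ e i \ e (f i), b = some v) ∨
        (b = some (p i) ∧ ∃ v ∈ e i \ e (f i), a = some v))) :
    ∀ i, 1 ≤ i → i < m → ∀ u ∈ e i \ e (f i), ∀ w ∈ e i,
      (S (m - 1)).Reachable (some u) (some w) ∧
      (S (m - 1)).dist (some u) (some w) ≤
        ((Finset.range (i + 1)).filter (fun j => w ∈ e j)).card + 1 := by
  have hmono : MonotoneOn S (Set.Iio m) := monotoneOn_of_le_add_one Set.ordConnected_Iio
    fun j _ _ hj a b h ↦ (hSsucc (j + 1) (by omega) hj a b).2 (Or.inl h)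
  have hlast : ∀ j < m, S j ≤ S (m - 1) := fun j hj ↦
    hmono hj (Set.mem_Iio.2 (by omega)) (by omega)
  intro i hi him u hu w hw
  refine reachable_and_dist_le_of_edist_le <| edist_le_edgeDegree_add_one
    (fun j hj hjm ↦ (hf j hj hjm).1)
    (fun j hj hjm ↦ ⟨(mem_inter.1 (hp j hj hjm).1).2, (hp j hj hjm).2⟩) ?_ ?_
    i hi him u hu w hw
  · exact fun v hv ↦ hlast 0 (by omega) ((hS0 _ _).2 (Or.inl ⟨rfl, v, hv, rfl⟩))
  · exact fun j hj hjm v hv ↦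
      hlast j hjm ((hSsucc j hj hjm _ _).2 (Or.inr (Or.inl ⟨rfl, v, hv, rfl⟩)))

/-- In the iterative construction of the tree S from a connected
r-uniform tree T with edges e 0, …, e (m-1) (S 0 a star with root `none` and
leaves e 0; S i obtained from S (i-1) by attaching the vertices of
e i \ e (f i) as leaves to p i ∈ e i ∩ e (f i)), for every i ≥ 1, every
u ∈ e i \ e (f i) and every w ∈ e i, the distance in the final tree S (m-1)
between u and w is at most deg_{T_i}(w) + 1, where deg_{T_i}(w) is the number
of edges among e 0, …, e i containing w. -/
theorem stmt11 {V : Type*} [Fintype V] [DecidableEq V] (r m : ℕ) (hm : 1 ≤ m)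
    (e : ℕ → Finset V) (f : ℕ → ℕ) (p : ℕ → V)
    (S : ℕ → SimpleGraph (Option V))
    (huniform : ∀ i < m, (e i).card = r)
    (hf : ∀ i, 1 ≤ i → i < m → f i < i ∧
      e i ∩ (Finset.range i).biUnion e ⊆ e (f i) ∧
      1 ≤ (e i ∩ (Finset.range i).biUnion e).card ∧
      (e i ∩ (Finset.range i).biUnion e).card ≤ r - 1)
    (hp : ∀ i, 1 ≤ i → i < m →
      p i ∈ e i ∩ e (f i) ∧ (1 ≤ f i → p i ∉ e (f (f i))))
    (hS0 : ∀ a b : Option V, (S 0).Adj a b ↔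
      ((a = none ∧ ∃ v ∈ e 0, b = some v) ∨ (b = none ∧ ∃ v ∈ e 0, a = some v)))
    (hSsucc : ∀ i, 1 ≤ i → i < m → ∀ a b : Option V, (S i).Adj a b ↔
      ((S (i - 1)).Adj a b ∨
        (a = some (p i) ∧ ∃ v ∈ e i \ e (f i), b = some v) ∨
        (b = some (p i) ∧ ∃ v ∈ e i \ e (f i), a = some v))) :
    ∀ i, 1 ≤ i → i < m → ∀ u ∈ e i \ e (f i), ∀ w ∈ e i,
      (S (m - 1)).Reachable (some u) (some w) ∧
      (S (m - 1)).dist (some u) (some w) ≤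
        ((Finset.range (i + 1)).filter (fun j => w ∈ e j)).card + 1 :=
  stmt11_general r m e f p S hf hp hS0 hSsucc
end

section
/- Consequence of the construction: for every connected r-uniform tree T on n vertices with maximum degree at most d, and every edge e of T, any two vertices u, w ∈ e satisfy dist_S(u, w) ≤ d + 1 in the constructed graph tree S on n+1 vertices. -/
/-!
Let `deg_i w = degUpTo e i w` be the number of edges among `e 0, …, e i` containing `w`.
If `u ∈ e i` was attached at step `i` (or `i = 0`), then every `w ∈ e i` is within distance
`deg_i w + 1` of `u` in the final tree: go from `u` to its parent `p i`; either `w` was attached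
at step `i` too, or `w, p i ∈ e (f i)`, where `p i` is new at step `f i` and
`deg_{f i} w < deg_i w`. For arbitrary `u, w ∈ e i`, replace `i` by `f i` as long as both lie in
`e (f i)`; once they do not, one of them is new at step `i`.
-/

open Finset SimpleGraph

namespace StarAttachment

variable {V : Type*} [DecidableEq V] (e : ℕ → Finset V)

def degUpTo (i : ℕ) (w : V) : ℕ := #{j ∈ range (i + 1) | w ∈ e j}

variable {e}

lemma degUpTo_le_of_lt {i m : ℕ} (him : i < m) (w : V) :
    degUpTo e i w ≤ #{j ∈ range m | w ∈ e j} :=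
  card_le_card <| filter_subset_filter _ <| range_subset_range.mpr him

lemma one_le_degUpTo {i : ℕ} {w : V} (hw : w ∈ e i) : 1 ≤ degUpTo e i w :=
  card_pos.mpr ⟨i, mem_filter.mpr ⟨self_mem_range_succ i, hw⟩⟩

lemma degUpTo_lt {i j : ℕ} (hji : j < i) {w : V} (hw : w ∈ e i) :
    degUpTo e j w < degUpTo e i w := by
  refine card_lt_card ⟨filter_subset_filter _ (range_subset_range.mpr (by omega)), fun h ↦ ?_⟩
  have := mem_range.mp (mem_filter.mp (h (mem_filter.mpr ⟨self_mem_range_succ i, hw⟩))).1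
  omega

variable {G : SimpleGraph (Option V)} {m : ℕ} {f : ℕ → ℕ} {p : ℕ → V}
  (hf : ∀ i, 1 ≤ i → i < m → f i < i)
  (hp : ∀ i, 1 ≤ i → i < m → p i ∈ e (f i) ∧ (1 ≤ f i → p i ∉ e (f (f i))))
  (hroot : ∀ v ∈ e 0, G.Adj none (some v))
  (hleaf : ∀ i, 1 ≤ i → i < m → ∀ v ∈ e i, v ∉ e (f i) → G.Adj (some (p i)) (some v))
include hf hp hroot hleaf

lemma exists_walk_length_le_degUpTo_of_new {i : ℕ} (him : i < m) {u : V} (hu : u ∈ e i)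
    (hnew : i = 0 ∨ u ∉ e (f i)) {w : V} (hw : w ∈ e i) :
    ∃ q : G.Walk (some u) (some w), q.length ≤ degUpTo e i w + 1 := by
  induction i using Nat.strong_induction_on generalizing u w with
  | _ i ih =>
    have hdeg := one_le_degUpTo hw
    rcases Nat.eq_zero_or_pos i with rfl | hi
    · exact ⟨.cons (hroot u hu).symm (.cons (hroot w hw) .nil), by simpa using hdeg⟩
    have hu_new : u ∉ e (f i) := hnew.resolve_left hi.ne'
    have hup : G.Adj (some u) (some (p i)) := (hleaf i hi him u hu hu_new).symm
    by_cases hw_old : w ∈ e (f i)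
    · obtain ⟨hp_mem, hp_new⟩ := hp i hi him
      have hfi := hf i hi him
      obtain ⟨q, hq⟩ := ih (f i) hfi (hfi.trans him) hp_mem
        ((Nat.eq_zero_or_pos (f i)).imp_right hp_new) hw_old
      refine ⟨.cons hup q, ?_⟩
      have := degUpTo_lt hfi hw
      simp only [Walk.length_cons]
      omega
    · exact ⟨.cons hup (.cons (hleaf i hi him w hw hw_old) .nil), by simpa using hdeg⟩

lemma exists_walk_length_le_of_mem {d : ℕ} (hdeg : ∀ v : V, #{j ∈ range m | v ∈ e j} ≤ d)
    {i : ℕ} (him : i < m) {u w : V} (hu : u ∈ e i) (hw : w ∈ e i) :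
    ∃ q : G.Walk (some u) (some w), q.length ≤ d + 1 := by
  induction i using Nat.strong_induction_on with
  | _ i ih =>
    have bound {v : V} {q : G.Walk (some u) (some w)} (hq : q.length ≤ degUpTo e i v + 1) :
        q.length ≤ d + 1 := hq.trans (Nat.add_le_add_right ((degUpTo_le_of_lt him v).trans (hdeg v)) 1)
    rcases Nat.eq_zero_or_pos i with rfl | hi
    · obtain ⟨q, hq⟩ := exists_walk_length_le_degUpTo_of_new hf hp hroot hleaf him hu (.inl rfl) hw
      exact ⟨q, bound hq⟩
    by_cases hu_old : u ∈ e (f i)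
    · by_cases hw_old : w ∈ e (f i)
      · exact ih (f i) (hf i hi him) ((hf i hi him).trans him) hu_old hw_old
      · obtain ⟨q, hq⟩ :=
          exists_walk_length_le_degUpTo_of_new hf hp hroot hleaf him hw (.inr hw_old) hu
        exact ⟨q.reverse, bound (by rwa [Walk.length_reverse])⟩
    · obtain ⟨q, hq⟩ :=
        exists_walk_length_le_degUpTo_of_new hf hp hroot hleaf him hu (.inr hu_old) hw
      exact ⟨q, bound hq⟩

end StarAttachment

open StarAttachment in
theorem stmt12_general {V : Type*} [DecidableEq V] (r d m : ℕ)
    (e : ℕ → Finset V) (f : ℕ → ℕ) (p : ℕ → V)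
    (S : ℕ → SimpleGraph (Option V))
    (hdeg : ∀ v : V, ((Finset.range m).filter (fun j => v ∈ e j)).card ≤ d)
    (hf : ∀ i, 1 ≤ i → i < m → f i < i ∧
      e i ∩ (Finset.range i).biUnion e ⊆ e (f i) ∧
      1 ≤ (e i ∩ (Finset.range i).biUnion e).card ∧
      (e i ∩ (Finset.range i).biUnion e).card ≤ r - 1)
    (hp : ∀ i, 1 ≤ i → i < m →
      p i ∈ e i ∩ e (f i) ∧ (1 ≤ f i → p i ∉ e (f (f i))))
    (hS0 : ∀ a b : Option V, (S 0).Adj a b ↔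
      ((a = none ∧ ∃ v ∈ e 0, b = some v) ∨ (b = none ∧ ∃ v ∈ e 0, a = some v)))
    (hSsucc : ∀ i, 1 ≤ i → i < m → ∀ a b : Option V, (S i).Adj a b ↔
      ((S (i - 1)).Adj a b ∨
        (a = some (p i) ∧ ∃ v ∈ e i \ e (f i), b = some v) ∨
        (b = some (p i) ∧ ∃ v ∈ e i \ e (f i), a = some v))) :
    ∀ i < m, ∀ u ∈ e i, ∀ w ∈ e i,
      (S (m - 1)).Reachable (some u) (some w) ∧
      (S (m - 1)).dist (some u) (some w) ≤ d + 1 := by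
  intro i him u hu w hw
  have hmono : MonotoneOn S (Set.Iio m) := monotoneOn_of_le_add_one Set.ordConnected_Iio
    fun j _ _ hj a b hab ↦ (hSsucc (j + 1) (by omega) hj a b).mpr (.inl hab)
  have hle {j : ℕ} (hj : j < m) : S j ≤ S (m - 1) := hmono hj (Set.mem_Iio.mpr (by omega)) (by omega)
  have hroot (v : V) (hv : v ∈ e 0) : (S (m - 1)).Adj none (some v) :=
    hle (by omega) ((hS0 _ _).mpr (.inl ⟨rfl, v, hv, rfl⟩))
  have hleaf (j : ℕ) (hj : 1 ≤ j) (hjm : j < m) (v : V) (hv : v ∈ e j) (hv' : v ∉ e (f j)) :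
      (S (m - 1)).Adj (some (p j)) (some v) :=
    hle hjm ((hSsucc j hj hjm _ _).mpr (.inr (.inl ⟨rfl, v, mem_sdiff.mpr ⟨hv, hv'⟩, rfl⟩)))
  obtain ⟨q, hq⟩ := exists_walk_length_le_of_mem (fun j hj hjm ↦ (hf j hj hjm).1)
    (fun j hj hjm ↦ ⟨(mem_inter.mp (hp j hj hjm).1).2, (hp j hj hjm).2⟩) hroot hleaf hdeg him hu hw
  exact ⟨q.reachable, (dist_le q).trans hq⟩

/-- For a connected r-uniform tree T on V with maximum degree at
most d (edges e 0, …, e (m-1)) and the tree S on V ∪ {x} obtained by the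
iterative star-attachment construction (S 0 a star with root `none` and
leaves e 0; S i obtained from S (i-1) by attaching the vertices of
e i \ e (f i) as leaves to p i ∈ e i ∩ e (f i)): any two vertices u, w of a
common edge e i of T satisfy dist_S(u, w) ≤ d + 1 in the final tree
S = S (m-1). -/
theorem stmt12 {V : Type*} [Fintype V] [DecidableEq V] (r d m : ℕ) (hm : 1 ≤ m)
    (e : ℕ → Finset V) (f : ℕ → ℕ) (p : ℕ → V)
    (S : ℕ → SimpleGraph (Option V))
    (huniform : ∀ i < m, (e i).card = r)
    (hdeg : ∀ v : V, ((Finset.range m).filter (fun j => v ∈ e j)).card ≤ d)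
    (hf : ∀ i, 1 ≤ i → i < m → f i < i ∧
      e i ∩ (Finset.range i).biUnion e ⊆ e (f i) ∧
      1 ≤ (e i ∩ (Finset.range i).biUnion e).card ∧
      (e i ∩ (Finset.range i).biUnion e).card ≤ r - 1)
    (hp : ∀ i, 1 ≤ i → i < m →
      p i ∈ e i ∩ e (f i) ∧ (1 ≤ f i → p i ∉ e (f (f i))))
    (hS0 : ∀ a b : Option V, (S 0).Adj a b ↔
      ((a = none ∧ ∃ v ∈ e 0, b = some v) ∨ (b = none ∧ ∃ v ∈ e 0, a = some v)))
    (hSsucc : ∀ i, 1 ≤ i → i < m → ∀ a b : Option V, (S i).Adj a b ↔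
      ((S (i - 1)).Adj a b ∨
        (a = some (p i) ∧ ∃ v ∈ e i \ e (f i), b = some v) ∨
        (b = some (p i) ∧ ∃ v ∈ e i \ e (f i), a = some v))) :
    ∀ i < m, ∀ u ∈ e i, ∀ w ∈ e i,
      (S (m - 1)).Reachable (some u) (some w) ∧
      (S (m - 1)).dist (some u) (some w) ≤ d + 1 :=
  stmt12_general r d m e f p S hdeg hf hp hS0 hSsucc
end

section
/- For every ε with 0 < ε < 1/(2e) and all sufficiently large n, there exists a graph on exactly n vertices with maximum degree at most 80·(1/ε)·log(1/ε) which is an ε-expander, i.e., between every two disjoint sets of at least εn vertices there is an edge. -/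
/-!
Join every vertex `x` to `σ₁ x, …, σ_d x` for permutations `σ₁, …, σ_d` of the vertex set,
with `d = ⌈5 log(1/ε) / ε⌉`; all degrees are then at most `2d`. For a random permutation `π`
the image of a fixed `m`-set is a uniformly distributed `m`-set, so for `m = ⌈εn⌉` and fixed
`m`-sets `A`, `B` the probability that `π` maps `A` into `Bᶜ` is
`C(n-m,m) / C(n,m) ≤ exp(-m²/n)`. A union bound over the `C(n,m)² ≤ (en/m)^{2m}` pairs
`(A, B)` then leaves a choice of `σ` for which every pair of `m`-sets is joined by an edge,
and hence so is every pair of disjoint sets of size at least `εn`.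
-/

open Finset Equiv

namespace MulAction

variable {G X : Type*} [Group G] [MulAction G X] [Fintype G] [DecidableEq X]

theorem card_filter_smul_eq_smul (b : X) (h : G) :
    #{g : G | g • b = h • b} = Nat.card (stabilizer G b) := by
  rw [← Fintype.card_subtype, ← Nat.card_eq_fintype_card]
  exact Nat.card_congr
    { toFun := fun g => ⟨h⁻¹ * g, by simp [mem_stabilizer_iff, mul_smul, g.2]⟩
      invFun := fun s => ⟨h * s, by simp [mul_smul, mem_stabilizer_iff.mp s.2]⟩
      left_inv := fun g => by simp
      right_inv := fun s => by simp }

theorem card_filter_smul_mem_mul_card [Fintype X] [IsPretransitive G X] (b : X) (Y : Finset X) :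
    #{g : G | g • b ∈ Y} * Fintype.card X = #Y * Fintype.card G := by
  have hfibre : ∀ y ∈ Y,
      #{g ∈ ({g : G | g • b ∈ Y} : Finset G) | g • b = y} = Nat.card (stabilizer G b) := by
    intro y hy
    obtain ⟨h, rfl⟩ := exists_smul_eq G b y
    rw [← card_filter_smul_eq_smul b h, filter_filter]
    congr 1; ext g
    simp only [mem_filter, mem_univ, true_and, and_iff_right_iff_imp]
    exact fun hg => hg ▸ hy
  rw [card_eq_sum_card_fiberwise (f := (· • b)) (t := Y) (fun g hg => by simpa using hg),
    sum_congr rfl hfibre, sum_const, smul_eq_mul, mul_assoc, ← Nat.card_eq_fintype_card,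
    ← index_stabilizer_of_transitive G b, Subgroup.card_mul_index, Nat.card_eq_fintype_card]

end MulAction

theorem Equiv.Perm.card_filter_forall_mem_mul_choose {α : Type*} [Fintype α] [DecidableEq α]
    (A C : Finset α) :
    #{π : Perm α | ∀ a ∈ A, π a ∈ C} * (Fintype.card α).choose #A
      = (#C).choose #A * (Fintype.card α).factorial := by
  have := Set.powersetCard.isPretransitive (α := α) (n := #A)
  let b : Set.powersetCard α #A := Set.powersetCard.ofCard rfl
  let Y : Finset (Set.powersetCard α #A) := {S | (S : Finset α) ⊆ C}
  have hY : #Y = (#C).choose #A := by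
    rw [← card_powersetCard, ← card_map (Function.Embedding.subtype _)]
    congr 1; ext S
    simp [Y, Set.powersetCard.mem_iff, and_comm]
  have hX : Fintype.card (Set.powersetCard α #A) = (Fintype.card α).choose #A := by
    rw [← Nat.card_eq_fintype_card, Set.powersetCard.card, Nat.card_eq_fintype_card]
  have hfilter : ({π : Perm α | ∀ a ∈ A, π a ∈ C} : Finset (Perm α))
      = ({π | π • b ∈ Y} : Finset (Perm α)) := by
    ext π
    simp [Y, b, Finset.smul_finset_def, Set.powersetCard.ofCard, Finset.image_subset_iff]
  rw [hfilter, ← hX, MulAction.card_filter_smul_mem_mul_card, hY, Fintype.card_perm]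

theorem Nat.choose_mul_pow_le_pow_mul_choose {k n : ℕ} (hkn : k ≤ n) (m : ℕ) :
    k.choose m * n ^ m ≤ k ^ m * n.choose m := by
  have hpow : ∀ x : ℕ, x ^ m = ∏ _i ∈ range m, x := fun x => by simp
  have hdesc : k.descFactorial m * n ^ m ≤ k ^ m * n.descFactorial m := by
    rw [Nat.descFactorial_eq_prod_range, Nat.descFactorial_eq_prod_range, hpow n, hpow k,
      ← prod_mul_distrib, ← prod_mul_distrib]
    refine prod_le_prod (fun _ _ => Nat.zero_le _) fun i _ => ?_
    rw [Nat.sub_mul, Nat.mul_sub]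
    exact Nat.sub_le_sub_left (by rw [mul_comm]; exact Nat.mul_le_mul_left i hkn) _
  rw [Nat.descFactorial_eq_factorial_mul_choose, Nat.descFactorial_eq_factorial_mul_choose] at hdesc
  have := m.factorial_pos
  nlinarith

theorem Nat.choose_le_exp_mul_div_pow (n : ℕ) {m : ℕ} (hm : 0 < m) :
    (n.choose m : ℝ) ≤ (Real.exp 1 * n / m) ^ m := by
  have hm' : (0 : ℝ) < m := by exact_mod_cast hm
  have hfact : (m : ℝ) ^ m / m.factorial ≤ Real.exp 1 ^ m := by
    rw [← Real.exp_nat_mul, mul_one]; exact Real.pow_div_factorial_le_exp _ hm'.le m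
  calc (n.choose m : ℝ) ≤ n ^ m / m.factorial := Nat.choose_le_pow_div m n
    _ = (n / m) ^ m * (m ^ m / m.factorial) := by rw [div_pow]; field_simp
    _ ≤ (n / m) ^ m * Real.exp 1 ^ m := by gcongr
    _ = (Real.exp 1 * n / m) ^ m := by rw [← mul_pow]; ring_nf

theorem Nat.choose_sub_le_exp_mul_choose {m n : ℕ} (hn : 0 < n) (hmn : m ≤ n) :
    ((n - m).choose m : ℝ) ≤ Real.exp (-(m ^ 2 / n)) * n.choose m := by
  have hn' : (0 : ℝ) < n := by exact_mod_cast hn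
  have hratio : (1 - m / n : ℝ) ^ m ≤ Real.exp (-(m ^ 2 / n)) := by
    have hbase : (0 : ℝ) ≤ 1 - m / n := by
      rw [sub_nonneg, div_le_one hn']; exact_mod_cast hmn
    calc (1 - m / n : ℝ) ^ m ≤ Real.exp (-(m / n)) ^ m := by
          gcongr; linarith [Real.add_one_le_exp (-(m / n : ℝ))]
      _ = Real.exp (-(m ^ 2 / n)) := by rw [← Real.exp_nat_mul]; ring_nf
  have hchoose : ((n - m).choose m : ℝ) * n ^ m ≤ ((n : ℝ) - m) ^ m * n.choose m := by
    have := Nat.choose_mul_pow_le_pow_mul_choose (n.sub_le m) m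
    rw [← Nat.cast_sub hmn]; exact_mod_cast this
  calc ((n - m).choose m : ℝ) ≤ (1 - m / n) ^ m * n.choose m := by
        rw [one_sub_div hn'.ne', div_pow, div_mul_eq_mul_div, le_div_iff₀ (by positivity)]
        exact hchoose
    _ ≤ Real.exp (-(m ^ 2 / n)) * n.choose m := by gcongr

theorem Nat.choose_sq_mul_choose_sub_pow_lt {m n d : ℕ} (hm : 0 < m) (hmn : m ≤ n)
    (hd : 2 * (1 + Real.log (n / m)) < d * m / n) :
    n.choose m ^ 2 * (n - m).choose m ^ d < n.choose m ^ d := by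
  have hm' : (0 : ℝ) < m := by exact_mod_cast hm
  have hn' : (0 : ℝ) < n := by exact_mod_cast hm.trans_le hmn
  set E := Real.exp (2 * m * (1 + Real.log (n / m)))
  have hsq : (n.choose m : ℝ) ^ 2 ≤ E := by
    calc (n.choose m : ℝ) ^ 2 ≤ ((Real.exp 1 * n / m) ^ m) ^ 2 := by
          gcongr; exact Nat.choose_le_exp_mul_div_pow n hm
      _ = E := by
          rw [← pow_mul, mul_div_assoc, ← Real.exp_log (by positivity : (0 : ℝ) < n / m),
            ← Real.exp_add, ← Real.exp_nat_mul]
          simp only [E]; push_cast; ring_nf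
  have hexp : E * Real.exp (-(m ^ 2 / n)) ^ d < 1 := by
    rw [← Real.exp_nat_mul, ← Real.exp_add, Real.exp_lt_one_iff]
    have : (2 * (1 + Real.log (n / m)) - d * m / n) * m < 0 :=
      mul_neg_of_neg_of_pos (by linarith) hm'
    convert this using 1; ring
  suffices h : (n.choose m : ℝ) ^ 2 * ((n - m).choose m : ℝ) ^ d < (n.choose m : ℝ) ^ d by
    exact_mod_cast h
  calc (n.choose m : ℝ) ^ 2 * ((n - m).choose m : ℝ) ^ d
      ≤ E * (Real.exp (-(m ^ 2 / n)) * n.choose m) ^ d := by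
        gcongr; exact Nat.choose_sub_le_exp_mul_choose (hm.trans_le hmn) hmn
    _ = (E * Real.exp (-(m ^ 2 / n)) ^ d) * (n.choose m : ℝ) ^ d := by ring
    _ < 1 * (n.choose m : ℝ) ^ d := by
        have := Nat.choose_pos hmn
        gcongr
    _ = (n.choose m : ℝ) ^ d := one_mul _

theorem Equiv.Perm.exists_forall_exists_apply_mem {α : Type*} [Fintype α] [DecidableEq α]
    {m d : ℕ}
    (h : (Fintype.card α).choose m ^ 2 * (Fintype.card α - m).choose m ^ d
      < (Fintype.card α).choose m ^ d) :
    ∃ σ : Fin d → Perm α, ∀ A B : Finset α, #A = m → #B = m → ∃ t, ∃ a ∈ A, σ t a ∈ B := by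
  set N := Fintype.card α
  set P : Finset (Finset α) := univ.powersetCard m
  let avoiding : Finset α × Finset α → Finset (Perm α) := fun p => {π | ∀ a ∈ p.1, π a ∈ p.2ᶜ}
  have hcard : ∀ p ∈ P ×ˢ P,
      #(avoiding p) ^ d * N.choose m ^ d = (N - m).choose m ^ d * N.factorial ^ d := by
    rintro ⟨A, B⟩ hp
    rw [mem_product, mem_powersetCard_univ, mem_powersetCard_univ] at hp
    have := Perm.card_filter_forall_mem_mul_choose A Bᶜ
    rw [card_compl, hp.1, hp.2] at this
    rw [← mul_pow, ← mul_pow, this]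
  by_contra! hbad
  have hcover : (univ : Finset (Fin d → Perm α)) ⊆
      (P ×ˢ P).biUnion fun p => Fintype.piFinset fun _ => avoiding p := by
    intro σ _
    obtain ⟨A, B, hA, hB, hσ⟩ := hbad σ
    simp only [mem_biUnion, mem_product, Fintype.mem_piFinset]
    exact ⟨(A, B), ⟨mem_powersetCard_univ.mpr hA, mem_powersetCard_univ.mpr hB⟩,
      fun t => by simpa [avoiding] using hσ t⟩
  have hunion := (card_le_card hcover).trans card_biUnion_le
  simp only [card_univ, Fintype.card_pi, Fintype.card_perm, prod_const, Fintype.card_piFinset,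
    Fintype.card_fin] at hunion
  have := Nat.mul_le_mul_right (N.choose m ^ d) hunion
  rw [sum_mul, sum_congr rfl hcard, sum_const, card_product, card_powersetCard, card_univ,
    smul_eq_mul] at this
  have := Nat.mul_lt_mul_of_pos_right h (by positivity : 0 < N.factorial ^ d)
  linarith

def SimpleGraph.ofPerms {ι α : Type*} (σ : ι → Perm α) : SimpleGraph α :=
  SimpleGraph.fromRel fun x y => ∃ i, σ i x = y

namespace SimpleGraph

variable {ι α : Type*} {σ : ι → Perm α}

theorem ncard_neighborSet_ofPerms_le [Fintype ι] [DecidableEq α] (v : α) :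
    ((ofPerms σ).neighborSet v).ncard ≤ 2 * Fintype.card ι := by
  have hsub : (ofPerms σ).neighborSet v ⊆
      ↑(univ.image (fun i => σ i v) ∪ univ.image (fun i => (σ i).symm v)) := by
    rintro w ⟨-, ⟨i, rfl⟩ | ⟨i, rfl⟩⟩
    · simp
    · exact mem_coe.mpr
        (mem_union_right _ (mem_image.mpr ⟨i, mem_univ _, (σ i).symm_apply_apply w⟩))
  calc ((ofPerms σ).neighborSet v).ncard
      ≤ #(univ.image (fun i => σ i v) ∪ univ.image (fun i => (σ i).symm v)) := by
        rw [← Set.ncard_coe_finset]; exact Set.ncard_le_ncard hsub (Finset.finite_toSet _)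
    _ ≤ #(univ : Finset ι) + #(univ : Finset ι) :=
        (card_union_le _ _).trans (add_le_add card_image_le card_image_le)
    _ = 2 * Fintype.card ι := by rw [card_univ, two_mul]

theorem exists_adj_ofPerms_of_disjoint {m : ℕ}
    (hσ : ∀ A B : Finset α, #A = m → #B = m → ∃ i, ∃ a ∈ A, σ i a ∈ B)
    {A B : Finset α} (hAB : Disjoint A B) (hA : m ≤ #A) (hB : m ≤ #B) :
    ∃ a ∈ A, ∃ b ∈ B, (ofPerms σ).Adj a b := by
  obtain ⟨A', hA'A, hA'⟩ := exists_subset_card_eq hA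
  obtain ⟨B', hB'B, hB'⟩ := exists_subset_card_eq hB
  obtain ⟨i, a, ha, hb⟩ := hσ A' B' hA' hB'
  refine ⟨a, hA'A ha, σ i a, hB'B hb, ?_, Or.inl ⟨i, rfl⟩⟩
  intro h
  exact Finset.disjoint_left.mp hAB (hA'A ha) (by rw [h]; exact hB'B hb)

end SimpleGraph

theorem one_lt_log_one_div {ε : ℝ} (hε0 : 0 < ε) (hε : ε < 1 / Real.exp 1) :
    1 < Real.log (1 / ε) := by
  rwa [Real.lt_log_iff_exp_lt (by positivity), lt_one_div (Real.exp_pos 1) hε0]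

theorem two_mul_one_add_log_div_lt {ε : ℝ} {n m d : ℕ} (hε0 : 0 < ε) (hn : 0 < n)
    (hεm : ε * n ≤ m) (hL : 1 < Real.log (1 / ε)) (hd : 5 * (Real.log (1 / ε) / ε) ≤ d) :
    2 * (1 + Real.log (n / m)) < d * m / n := by
  have hn' : (0 : ℝ) < n := by exact_mod_cast hn
  have hm' : (0 : ℝ) < m := (mul_pos hε0 hn').trans_le hεm
  have hlog : Real.log (n / m) ≤ Real.log (1 / ε) := Real.log_le_log (by positivity) (by
    rw [div_le_div_iff₀ hm' hε0]; linarith)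
  have hdm : 5 * Real.log (1 / ε) ≤ d * m / n := by
    rw [le_div_iff₀ hn']
    calc 5 * Real.log (1 / ε) * n = 5 * (Real.log (1 / ε) / ε) * (ε * n) := by field_simp
      _ ≤ d * m := by gcongr
  linarith

/-- For every ε with 0 < ε < 1/(2e) and all sufficiently large
n, there exists a graph on exactly n vertices with maximum degree at most
80·(1/ε)·log(1/ε) which is an ε-expander: between every two disjoint sets of
at least εn vertices there is an edge. -/
theorem stmt16 (ε : ℝ) (hε0 : 0 < ε) (hε1 : ε < 1 / (2 * Real.exp 1)) :
    ∃ n₀ : ℕ, ∀ n : ℕ, n₀ ≤ n → ∃ G : SimpleGraph (Fin n),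
      (∀ v, ((G.neighborSet v).ncard : ℝ) ≤ 80 * (1 / ε) * Real.log (1 / ε)) ∧
      ∀ A B : Finset (Fin n), Disjoint A B →
        ε * n ≤ A.card → ε * n ≤ B.card → ∃ a ∈ A, ∃ b ∈ B, G.Adj a b := by
  set L := Real.log (1 / ε)
  have hε : ε < 1 / Real.exp 1 := hε1.trans_le (by gcongr; linarith [Real.exp_pos 1])
  have hL : 1 < L := one_lt_log_one_div hε0 hε
  have hε' : ε < 1 :=
    hε.trans (by rw [div_lt_one (Real.exp_pos 1)]; linarith [Real.add_one_le_exp 1])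
  have hLε : 1 < L / ε := by rw [lt_div_iff₀ hε0]; linarith
  refine ⟨1, fun n hn => ?_⟩
  set d := ⌈5 * (L / ε)⌉₊
  set m := ⌈ε * n⌉₊
  have hm : 0 < m := Nat.ceil_pos.mpr (by positivity)
  have hmn : m ≤ n := Nat.ceil_le.mpr (mul_le_of_le_one_left (Nat.cast_nonneg n) hε'.le)
  have hunion := Nat.choose_sq_mul_choose_sub_pow_lt (d := d) hm hmn
    (two_mul_one_add_log_div_lt hε0 hn (Nat.le_ceil _) hL (Nat.le_ceil _))
  obtain ⟨σ, hσ⟩ := Perm.exists_forall_exists_apply_mem (α := Fin n)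
    (by simpa only [Fintype.card_fin] using hunion)
  refine ⟨SimpleGraph.ofPerms σ, fun v => ?_, fun A B hAB hA hB =>
    SimpleGraph.exists_adj_ofPerms_of_disjoint hσ hAB (Nat.ceil_le.mpr hA) (Nat.ceil_le.mpr hB)⟩
  have hd : (d : ℝ) < 5 * (L / ε) + 1 := Nat.ceil_lt_add_one (by positivity)
  calc ((SimpleGraph.ofPerms σ).neighborSet v).ncard ≤ (2 * d : ℝ) := by
        exact_mod_cast
          (SimpleGraph.ncard_neighborSet_ofPerms_le v).trans_eq (by rw [Fintype.card_fin])
    _ ≤ 80 * (1 / ε) * L := by rw [mul_assoc, one_div_mul_eq_div]; linarith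
end
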